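/- arXiv:math/0403216 — 6 statements merged into one kernel-verified Lean document; each statement's English description precedes it below -/
import Mathlib

section
/- If a matroid M on a finite ground set is Rayleigh, then every minor of M (every matroid obtained from M by a sequence of deletions and contractions) is Rayleigh. -/
open MvPolynomial
open scoped Classical

/-- The basis generating polynomial `M_I^J(y)` of the minor of `M` obtained by
contracting `I` and deleting `J`:
`M_I^J(y) = Σ_{B basis of M, I ⊆ B ⊆ E∖J} Π_{e ∈ B∖I} y_e`.
(It is `0` when `I` is dependent.) -/
noncomputable def Matroid.minorPoly {α : Type*} [Fintype α] [DecidableEq α]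
    (M : Matroid α) (I J : Finset α) : MvPolynomial α ℝ :=
  ∑ B ∈ Finset.univ.filter
      (fun B : Finset α => M.IsBase (B : Set α) ∧ I ⊆ B ∧ Disjoint B J),
    ∏ e ∈ B \ I, X e

/-- The Rayleigh difference `ΔM{e,f} = M_e^f · M_f^e − M_{ef} · M^{ef}`. -/
noncomputable def Matroid.rayleighDiff {α : Type*} [Fintype α] [DecidableEq α]
    (M : Matroid α) (e f : α) : MvPolynomial α ℝ :=
  M.minorPoly {e} {f} * M.minorPoly {f} {e} - M.minorPoly {e, f} ∅ * M.minorPoly ∅ {e, f}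

/-- A matroid is Rayleigh if `ΔM{e,f}(y) ≥ 0` for all distinct ground set elements
`e, f` whenever all the variables are positive. -/
def Matroid.IsRayleigh {α : Type*} [Fintype α] [DecidableEq α] (M : Matroid α) : Prop :=
  ∀ e ∈ M.E, ∀ f ∈ M.E, e ≠ f → ∀ y : α → ℝ,
    (∀ c ∈ M.E, 0 < y c) → 0 ≤ eval y (M.rayleighDiff e f)

/-- Deletion of the set `D` from the matroid `M`: restrict to `M.E \ D`. -/
def Matroid.del {α : Type*} (M : Matroid α) (D : Set α) : Matroid α :=
  M.restrict (M.E \ D)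

/-- Contraction of the set `C` in the matroid `M`, defined by duality:
`M ／ C = (M✶ ＼ C)✶`. -/
def Matroid.con {α : Type*} (M : Matroid α) (C : Set α) : Matroid α :=
  (M✶.del C)✶

/-- `N` is a minor of `M` if it is obtained from `M` by a sequence of deletions and
contractions; equivalently, by contracting some set and then deleting some set. -/
def Matroid.IsMinorOf {α : Type*} (N M : Matroid α) : Prop :=
  ∃ C D : Set α, N = (M.con C).del D


namespace RayleighAux
variable {α : Type*} [Fintype α] [DecidableEq α]

lemma quad_nonneg {a b c : ℝ} (h : ∀ t : ℝ, 0 < t → 0 ≤ a * t ^ 2 + b * t + c) :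
    0 ≤ a ∧ 0 ≤ c := by
  constructor
  · by_contra ha
    push_neg at ha
    set t : ℝ := max 1 ((|b| + |c| + 1) / (-a)) with ht
    have ht1 : (1 : ℝ) ≤ t := le_max_left _ _
    have ht0 : 0 < t := lt_of_lt_of_le one_pos ht1
    have ht2 : (|b| + |c| + 1) / (-a) ≤ t := le_max_right _ _
    have hat : a * t ≤ -(|b| + |c| + 1) := by
      rw [div_le_iff₀ (by linarith : (0:ℝ) < -a)] at ht2
      nlinarith
    have hb : b ≤ |b| := le_abs_self b
    have hc' : c ≤ |c| := le_abs_self c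
    have habs : 0 ≤ |c| := abs_nonneg c
    have := h t ht0
    nlinarith
  · by_contra hc
    push_neg at hc
    set K : ℝ := |a| + |b| + 1 with hK
    have hK0 : 0 < K := by positivity
    set t : ℝ := min 1 (-c / (2 * K)) with ht
    have ht1 : t ≤ 1 := min_le_left _ _
    have ht0 : 0 < t := lt_min one_pos (div_pos (by linarith) (by positivity))
    have ht2 : t ≤ -c / (2 * K) := min_le_right _ _
    have htK : t * (2 * K) ≤ -c := by
      rw [le_div_iff₀ (by positivity : (0:ℝ) < 2 * K)] at ht2
      linarith
    have ha : a ≤ |a| := le_abs_self a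
    have hb : b ≤ |b| := le_abs_self b
    have ha0 : 0 ≤ |a| := abs_nonneg a
    have hb0 : 0 ≤ |b| := abs_nonneg b
    have := h t ht0
    nlinarith [sq_nonneg t, mul_pos ht0 ht0]


lemma del_base_not_coloop (M : Matroid α) {e : α}
    (h : ∃ B0, M.IsBase B0 ∧ e ∉ B0) {B : Set α} :
    (M.del {e}).IsBase B ↔ M.IsBase B ∧ e ∉ B := by
  obtain ⟨B0, hB0, heB0⟩ := h
  rw [Matroid.del, Matroid.isBase_restrict_iff Set.diff_subset]
  constructor
  · intro hB
    have hBE : B ⊆ M.E \ {e} := hB.subset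
    exact ⟨hB.isBase_of_isBase_subset hB0
      (Set.subset_diff_singleton hB0.subset_ground heB0),
      fun he => (hBE he).2 rfl⟩
  · rintro ⟨hB, heB⟩
    exact hB.isBasis_ground.isBasis_subset
      (Set.subset_diff_singleton hB.subset_ground heB) Set.diff_subset

lemma del_base_coloop [Fintype α] (M : Matroid α) {e : α}
    (h : ∀ B, M.IsBase B → e ∈ B) {B : Set α} :
    (M.del {e}).IsBase B ↔ M.IsBase (insert e B) ∧ e ∉ B := by
  rw [Matroid.del, Matroid.isBase_restrict_iff Set.diff_subset]
  constructor
  · intro hB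
    have heB : e ∉ B := fun he => (hB.subset he).2 rfl
    obtain ⟨B0, hB0, hBB0⟩ := hB.indep.exists_isBase_superset
    have heB0 : e ∈ B0 := h B0 hB0
    have hBeq : B = B0 \ {e} := by
      refine ((Matroid.isBasis_iff Set.diff_subset).1 hB).2.2 _
        (hB0.indep.subset Set.diff_subset)
        (Set.subset_diff_singleton hBB0 heB) (Set.diff_subset_diff_left hB0.subset_ground)
    rw [hBeq, Set.insert_diff_singleton, Set.insert_eq_self.2 heB0]
    exact ⟨hB0, fun he => he.2 rfl⟩
  · rintro ⟨hB, heB⟩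
    have hBE : B ⊆ M.E \ {e} := Set.subset_diff_singleton
      ((Set.subset_insert e B).trans hB.subset_ground) heB
    rw [Matroid.isBasis_iff Set.diff_subset]
    refine ⟨hB.indep.subset (Set.subset_insert e B), hBE, fun J hJ hBJ hJE => ?_⟩
    obtain ⟨B2, hB2, hJB2⟩ := hJ.exists_isBase_superset
    have heB2 : e ∈ B2 := h B2 hB2
    have hJcard : J.ncard ≤ B.ncard := by
      have h1 : J ⊆ B2 \ {e} := Set.subset_diff_singleton hJB2 (fun he => (hJE he).2 rfl)
      have h2 : J.ncard ≤ (B2 \ {e}).ncard := Set.ncard_le_ncard h1 (Set.toFinite _)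
      have h3 : (B2 \ {e}).ncard = B2.ncard - 1 := Set.ncard_diff_singleton_of_mem heB2
      have h4 : B2.ncard = (insert e B).ncard := hB2.ncard_eq_ncard_of_isBase hB
      have h5 : (insert e B).ncard = B.ncard + 1 := Set.ncard_insert_of_notMem heB
      omega
    exact Set.eq_of_subset_of_ncard_le hBJ hJcard (Set.toFinite _)

lemma con_base_not_loop (M : Matroid α) {e : α}
    (h : ∃ B0, M.IsBase B0 ∧ e ∈ B0) {B : Set α} :
    (M.con {e}).IsBase B ↔ M.IsBase (insert e B) ∧ e ∉ B := by
  obtain ⟨B0, hB0, heB0⟩ := h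
  have heE : e ∈ M.E := hB0.subset_ground heB0
  have hdual : ∃ B1, M✶.IsBase B1 ∧ e ∉ B1 :=
    ⟨M.E \ B0, hB0.compl_isBase_dual, fun he => he.2 heB0⟩
  rw [Matroid.con, Matroid.dual_isBase_iff']
  rw [show (M✶.del {e}).E = M.E \ {e} from rfl]
  rw [del_base_not_coloop M✶ hdual, Matroid.dual_isBase_iff']
  constructor
  · rintro ⟨⟨⟨hb, hsub⟩, he⟩, hBE⟩
    have hcompl : M.E \ ((M.E \ {e}) \ B) = insert e B := by
      rw [Set.diff_diff]
      rw [Set.diff_diff_cancel_left]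
      · rw [Set.union_comm]; exact Set.union_singleton
      · exact Set.union_subset (Set.singleton_subset_iff.2 heE) (hBE.trans Set.diff_subset)
    rw [hcompl] at hb
    exact ⟨hb, fun he' => (hBE he').2 rfl⟩
  · rintro ⟨hb, heB⟩
    have hBE : B ⊆ M.E \ {e} := Set.subset_diff_singleton
      ((Set.subset_insert e B).trans hb.subset_ground) heB
    have hcompl : M.E \ ((M.E \ {e}) \ B) = insert e B := by
      rw [Set.diff_diff, Set.diff_diff_cancel_left]
      · rw [Set.union_comm]; exact Set.union_singleton
      · exact Set.union_subset (Set.singleton_subset_iff.2 heE) (hBE.trans Set.diff_subset)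
    refine ⟨⟨⟨?_, ?_⟩, fun he => he.1.2 rfl⟩, hBE⟩
    · rw [hcompl]; exact hb
    · exact Set.diff_subset.trans Set.diff_subset

lemma con_base_loop [Fintype α] (M : Matroid α) {e : α}
    (h : ∀ B, M.IsBase B → e ∉ B) {B : Set α} :
    (M.con {e}).IsBase B ↔ M.IsBase B ∧ e ∉ B := by
  by_cases heE : e ∈ M.E
  · have hcoloop : ∀ X, M✶.IsBase X → e ∈ X := by
      intro X hX
      have := hX.compl_isBase_of_dual
      have hne : e ∉ M.E \ X := h _ this
      by_contra heX
      exact hne ⟨heE, heX⟩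
    rw [Matroid.con, Matroid.dual_isBase_iff']
    rw [show (M✶.del {e}).E = M.E \ {e} from rfl]
    rw [del_base_coloop M✶ hcoloop]
    constructor
    · rintro ⟨⟨hb, he⟩, hBE⟩
      have heB : e ∉ B := fun he' => (hBE he').2 rfl
      have hins : insert e ((M.E \ {e}) \ B) = M.E \ B := by
        ext x
        simp only [Set.mem_insert_iff, Set.mem_diff, Set.mem_singleton_iff]
        constructor
        · rintro (rfl | ⟨⟨hx, _⟩, hxB⟩)
          · exact ⟨heE, heB⟩
          · exact ⟨hx, hxB⟩
        · rintro ⟨hx, hxB⟩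
          by_cases hxe : x = e
          · exact Or.inl hxe
          · exact Or.inr ⟨⟨hx, hxe⟩, hxB⟩
      rw [hins] at hb
      rw [Matroid.dual_isBase_iff (Set.diff_subset)] at hb
      rw [Set.diff_diff_cancel_left (hBE.trans Set.diff_subset)] at hb
      exact ⟨hb, heB⟩
    · rintro ⟨hb, heB⟩
      have hBE : B ⊆ M.E \ {e} := Set.subset_diff_singleton hb.subset_ground heB
      have hins : insert e ((M.E \ {e}) \ B) = M.E \ B := by
        ext x
        simp only [Set.mem_insert_iff, Set.mem_diff, Set.mem_singleton_iff]
        constructor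
        · rintro (rfl | ⟨⟨hx, _⟩, hxB⟩)
          · exact ⟨heE, heB⟩
          · exact ⟨hx, hxB⟩
        · rintro ⟨hx, hxB⟩
          by_cases hxe : x = e
          · exact Or.inl hxe
          · exact Or.inr ⟨⟨hx, hxe⟩, hxB⟩
      refine ⟨⟨?_, fun he => he.1.2 rfl⟩, hBE⟩
      rw [hins, Matroid.dual_isBase_iff (Set.diff_subset)]
      rwa [Set.diff_diff_cancel_left hb.subset_ground]
  · have hE : M.E \ ({e} : Set α) = M.E := by
      rw [Set.diff_singleton_eq_self heE]
    have hE' : M✶.E \ ({e} : Set α) = M✶.E := by rw [Matroid.dual_ground]; exact hE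
    have : M.con {e} = M := by
      rw [Matroid.con, Matroid.del, hE', Matroid.restrict_ground_eq_self, Matroid.dual_dual]
    rw [this]
    exact ⟨fun hb => ⟨hb, fun he => heE (hb.subset_ground he)⟩, fun h => h.1⟩


/-- The fundamental split of the basis polynomial along a single element. -/
lemma minorPoly_split (M : Matroid α) {e : α} {I J : Finset α}
    (heI : e ∉ I) (heJ : e ∉ J) :
    M.minorPoly I J
      = X e * M.minorPoly (insert e I) J + M.minorPoly I (insert e J) := by
  classical
  unfold Matroid.minorPoly
  rw [← Finset.sum_filter_add_sum_filter_not
      (Finset.univ.filter (fun B : Finset α => M.IsBase (B : Set α) ∧ I ⊆ B ∧ Disjoint B J))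
      (fun B => e ∈ B)]
  congr 1
  · rw [Finset.mul_sum]
    rw [Finset.filter_filter]
    apply Finset.sum_congr
    · ext B
      simp only [Finset.mem_filter, Finset.mem_univ, true_and, Finset.insert_subset_iff]
      tauto
    · intro B hB
      simp only [Finset.mem_filter, Finset.mem_univ, true_and] at hB
      obtain ⟨hbase, hIB, hdisj⟩ := hB
      have heBI : e ∈ B \ I :=
        Finset.mem_sdiff.2 ⟨hIB (Finset.mem_insert_self e I), heI⟩
      rw [← Finset.mul_prod_erase _ _ heBI]
      congr 1
      apply Finset.prod_congr _ (fun _ _ => rfl)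
      ext x
      simp only [Finset.mem_erase, Finset.mem_sdiff, Finset.mem_insert]
      tauto
  · rw [Finset.filter_filter]
    apply Finset.sum_congr _ (fun _ _ => rfl)
    ext B
    simp only [Finset.mem_filter, Finset.mem_univ, true_and,
      Finset.disjoint_insert_right]
    tauto

/-- Transfer for `N` whose bases are the bases of `M` avoiding `e`. -/
lemma minorPoly_del (N M : Matroid α) {e : α}
    (h : ∀ B : Finset α, N.IsBase (B : Set α) ↔ M.IsBase (B : Set α) ∧ e ∉ B)
    {I J : Finset α} :
    N.minorPoly I J = M.minorPoly I (insert e J) := by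
  unfold Matroid.minorPoly
  apply Finset.sum_congr _ (fun _ _ => rfl)
  ext B
  simp only [Finset.mem_filter, Finset.mem_univ, true_and, h B,
    Finset.disjoint_insert_right]
  tauto

/-- Transfer for `N` whose bases are `B` with `insert e B` a base of `M`. -/
lemma minorPoly_con (N M : Matroid α) {e : α}
    (h : ∀ B : Finset α, N.IsBase (B : Set α) ↔ M.IsBase (insert e (B : Set α)) ∧ e ∉ B)
    {I J : Finset α} (heI : e ∉ I) (heJ : e ∉ J) :
    N.minorPoly I J = M.minorPoly (insert e I) J := by
  unfold Matroid.minorPoly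
  refine Finset.sum_nbij' (fun B => insert e B) (fun B => B.erase e) ?_ ?_ ?_ ?_ ?_
  · intro B hB
    simp only [Finset.mem_filter, Finset.mem_univ, true_and, h B] at hB
    obtain ⟨⟨hbase, heB⟩, hIB, hdisj⟩ := hB
    simp only [Finset.mem_filter, Finset.mem_univ, true_and]
    refine ⟨?_, Finset.insert_subset_insert e hIB, ?_⟩
    · rwa [Finset.coe_insert]
    · rw [Finset.disjoint_insert_left]
      exact ⟨heJ, hdisj⟩
  · intro B hB
    simp only [Finset.mem_filter, Finset.mem_univ, true_and] at hB
    obtain ⟨hbase, hIB, hdisj⟩ := hB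
    have heB : e ∈ B := hIB (Finset.mem_insert_self e I)
    simp only [Finset.mem_filter, Finset.mem_univ, true_and, h (B.erase e)]
    refine ⟨⟨?_, Finset.notMem_erase e B⟩, ?_, ?_⟩
    · rw [Finset.coe_erase, Set.insert_diff_singleton,
        Set.insert_eq_self.2 (by exact_mod_cast heB)]
      exact hbase
    · intro x hx
      exact Finset.mem_erase.2 ⟨fun hxe => heI (hxe ▸ hx), hIB (Finset.mem_insert_of_mem hx)⟩
    · exact Finset.disjoint_of_subset_left (Finset.erase_subset e B) hdisj
  · intro B hB
    simp only [Finset.mem_filter, Finset.mem_univ, true_and, h B] at hB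
    exact Finset.erase_insert hB.1.2
  · intro B hB
    simp only [Finset.mem_filter, Finset.mem_univ, true_and] at hB
    exact Finset.insert_erase (hB.2.1 (Finset.mem_insert_self e I))
  · intro B hB
    simp only [Finset.mem_filter, Finset.mem_univ, true_and, h B] at hB
    apply Finset.prod_congr _ (fun _ _ => rfl)
    ext x
    simp only [Finset.mem_sdiff, Finset.mem_insert]
    have heB : x ∈ B → x ≠ e := fun hx hxe => hB.1.2 (hxe ▸ hx)
    tauto

/-- Evaluation of a minor polynomial does not depend on the variable `e`
when `e ∈ I` or `e ∈ J`. -/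
lemma eval_minorPoly_congr (M : Matroid α) {e : α} {I J : Finset α}
    (h : e ∈ I ∨ e ∈ J) {y y' : α → ℝ} (hy : ∀ c, c ≠ e → y c = y' c) :
    eval y (M.minorPoly I J) = eval y' (M.minorPoly I J) := by
  unfold Matroid.minorPoly
  rw [map_sum, map_sum]
  apply Finset.sum_congr rfl
  intro B hB
  simp only [Finset.mem_filter, Finset.mem_univ, true_and] at hB
  rw [eval_prod, eval_prod]
  apply Finset.prod_congr rfl
  intro x hx
  rw [Finset.mem_sdiff] at hx
  rw [eval_X, eval_X]
  apply hy
  rintro rfl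
  rcases h with he | he
  · exact hx.2 he
  · exact (Finset.disjoint_left.1 hB.2.2) hx.1 he


lemma del_eq_self (M : Matroid α) {D : Set α} (h : M.E ∩ D = ∅) : M.del D = M := by
  have hE : M.E \ D = M.E :=
    (Set.disjoint_iff_inter_eq_empty.2 h).sdiff_eq_left
  rw [Matroid.del, hE, Matroid.restrict_ground_eq_self]

lemma del_del (M : Matroid α) {D : Set α} {e : α} (he : e ∈ D) :
    M.del D = (M.del {e}).del D := by
  rw [Matroid.del, Matroid.del, Matroid.del, Matroid.restrict_ground_eq,
    Matroid.restrict_restrict_eq _ (Set.diff_subset : (M.E \ {e}) \ D ⊆ M.E \ {e})]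
  congr 1
  show M.E \ D = (M.E \ {e}) \ D
  rw [Set.diff_diff, Set.union_eq_self_of_subset_left (Set.singleton_subset_iff.2 he)]

lemma con_eq_self (M : Matroid α) {C : Set α} (h : M.E ∩ C = ∅) : M.con C = M := by
  rw [Matroid.con, del_eq_self M✶ (by rwa [Matroid.dual_ground]), Matroid.dual_dual]

lemma con_con (M : Matroid α) {C : Set α} {e : α} (he : e ∈ C) :
    M.con C = (M.con {e}).con C := by
  rw [Matroid.con, Matroid.con, Matroid.con, Matroid.dual_dual, ← del_del M✶ he]


lemma main_step (M : Matroid α) (h : M.IsRayleigh) {e f g : α}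
    (hf : f ∈ M.E) (hg : g ∈ M.E) (hfg : f ≠ g) (hef : e ≠ f) (heg : e ≠ g)
    (y : α → ℝ) (hy : ∀ c ∈ M.E, c ≠ e → 0 < y c) :
    (0 ≤ eval y (M.minorPoly (insert e {f}) {g}) * eval y (M.minorPoly (insert e {g}) {f})
        - eval y (M.minorPoly (insert e {f, g}) ∅) * eval y (M.minorPoly (insert e ∅) {f, g}))
    ∧ (0 ≤ eval y (M.minorPoly {f} (insert e {g})) * eval y (M.minorPoly {g} (insert e {f}))
        - eval y (M.minorPoly {f, g} (insert e ∅)) * eval y (M.minorPoly ∅ (insert e {f, g}))) := by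
  have hef' : e ∉ ({f} : Finset α) := by simp [hef]
  have heg' : e ∉ ({g} : Finset α) := by simp [heg]
  have hefg : e ∉ ({f, g} : Finset α) := by simp [hef, heg]
  have hee : e ∉ (∅ : Finset α) := by simp
  have key : ∀ I J : Finset α, e ∉ I → e ∉ J → ∀ t : ℝ,
      eval (Function.update y e t) (M.minorPoly I J)
        = t * eval y (M.minorPoly (insert e I) J)
          + eval y (M.minorPoly I (insert e J)) := by
    intro I J hI hJ t
    rw [minorPoly_split M hI hJ, map_add, map_mul, eval_X, Function.update_self]
    congr 1
    · congr 1
      exact eval_minorPoly_congr M (Or.inl (Finset.mem_insert_self e I))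
        (fun c hc => Function.update_of_ne hc _ _)
    · exact eval_minorPoly_congr M (Or.inr (Finset.mem_insert_self e J))
        (fun c hc => Function.update_of_ne hc _ _)
  set a1 := eval y (M.minorPoly (insert e {f}) {g})
  set a2 := eval y (M.minorPoly (insert e {g}) {f})
  set a3 := eval y (M.minorPoly (insert e {f, g}) ∅)
  set a4 := eval y (M.minorPoly (insert e ∅) {f, g})
  set c1 := eval y (M.minorPoly {f} (insert e {g}))
  set c2 := eval y (M.minorPoly {g} (insert e {f}))
  set c3 := eval y (M.minorPoly {f, g} (insert e ∅))
  set c4 := eval y (M.minorPoly ∅ (insert e {f, g}))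
  have quad : ∀ t : ℝ, 0 < t →
      0 ≤ (a1 * a2 - a3 * a4) * t ^ 2
          + (a1 * c2 + c1 * a2 - a3 * c4 - c3 * a4) * t + (c1 * c2 - c3 * c4) := by
    intro t ht
    have hpos : ∀ c ∈ M.E, 0 < Function.update y e t c := by
      intro x hx
      by_cases hxe : x = e
      · subst hxe; rw [Function.update_self]; exact ht
      · rw [Function.update_of_ne hxe]; exact hy x hx hxe
    have h0 := h f hf g hg hfg (Function.update y e t) hpos
    rw [Matroid.rayleighDiff, map_sub, map_mul, map_mul,
      key {f} {g} hef' heg' t, key {g} {f} heg' hef' t,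
      key {f, g} ∅ hefg hee t, key ∅ {f, g} hee hefg t] at h0
    nlinarith [h0]
  exact quad_nonneg quad

lemma isRayleigh_del_singleton (M : Matroid α) (h : M.IsRayleigh) (e : α) :
    (M.del {e}).IsRayleigh := by
  intro f hf g hg hfg y hy
  have hf' : f ∈ M.E \ {e} := hf
  have hg' : g ∈ M.E \ {e} := hg
  have hef : e ≠ f := fun he => hf'.2 (by simp [he.symm])
  have heg : e ≠ g := fun he => hg'.2 (by simp [he.symm])
  have hy' : ∀ c ∈ M.E, c ≠ e → 0 < y c := fun c hc hce =>
    hy c ⟨hc, by simp [hce]⟩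
  by_cases hcol : ∃ B0, M.IsBase B0 ∧ e ∉ B0
  · have hbase : ∀ B : Finset α,
        (M.del {e}).IsBase (B : Set α) ↔ M.IsBase (B : Set α) ∧ e ∉ B := by
      intro B
      rw [del_base_not_coloop M hcol]
      simp [Finset.mem_coe]
    rw [Matroid.rayleighDiff, map_sub, map_mul, map_mul,
      minorPoly_del _ M hbase, minorPoly_del _ M hbase,
      minorPoly_del _ M hbase, minorPoly_del _ M hbase]
    exact (main_step M h hf'.1 hg'.1 hfg hef heg y hy').2
  · push_neg at hcol
    have hbase : ∀ B : Finset α,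
        (M.del {e}).IsBase (B : Set α) ↔ M.IsBase (insert e (B : Set α)) ∧ e ∉ B := by
      intro B
      rw [del_base_coloop M hcol]
      simp [Finset.mem_coe]
    have hef' : e ∉ ({f} : Finset α) := by simp [hef]
    have heg' : e ∉ ({g} : Finset α) := by simp [heg]
    have hefg : e ∉ ({f, g} : Finset α) := by simp [hef, heg]
    have hee : e ∉ (∅ : Finset α) := by simp
    rw [Matroid.rayleighDiff, map_sub, map_mul, map_mul,
      minorPoly_con _ M hbase hef' heg', minorPoly_con _ M hbase heg' hef',
      minorPoly_con _ M hbase hefg hee, minorPoly_con _ M hbase hee hefg]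
    exact (main_step M h hf'.1 hg'.1 hfg hef heg y hy').1

lemma isRayleigh_con_singleton (M : Matroid α) (h : M.IsRayleigh) (e : α) :
    (M.con {e}).IsRayleigh := by
  intro f hf g hg hfg y hy
  have hf' : f ∈ M.E \ {e} := hf
  have hg' : g ∈ M.E \ {e} := hg
  have hef : e ≠ f := fun he => hf'.2 (by simp [he.symm])
  have heg : e ≠ g := fun he => hg'.2 (by simp [he.symm])
  have hy' : ∀ c ∈ M.E, c ≠ e → 0 < y c := fun c hc hce =>
    hy c ⟨hc, by simp [hce]⟩
  by_cases hloop : ∃ B0, M.IsBase B0 ∧ e ∈ B0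
  · have hbase : ∀ B : Finset α,
        (M.con {e}).IsBase (B : Set α) ↔ M.IsBase (insert e (B : Set α)) ∧ e ∉ B := by
      intro B
      rw [con_base_not_loop M hloop]
      simp [Finset.mem_coe]
    have hef' : e ∉ ({f} : Finset α) := by simp [hef]
    have heg' : e ∉ ({g} : Finset α) := by simp [heg]
    have hefg : e ∉ ({f, g} : Finset α) := by simp [hef, heg]
    have hee : e ∉ (∅ : Finset α) := by simp
    rw [Matroid.rayleighDiff, map_sub, map_mul, map_mul,
      minorPoly_con _ M hbase hef' heg', minorPoly_con _ M hbase heg' hef',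
      minorPoly_con _ M hbase hefg hee, minorPoly_con _ M hbase hee hefg]
    exact (main_step M h hf'.1 hg'.1 hfg hef heg y hy').1
  · push_neg at hloop
    have hbase : ∀ B : Finset α,
        (M.con {e}).IsBase (B : Set α) ↔ M.IsBase (B : Set α) ∧ e ∉ B := by
      intro B
      rw [con_base_loop M hloop]
      simp [Finset.mem_coe]
    rw [Matroid.rayleighDiff, map_sub, map_mul, map_mul,
      minorPoly_del _ M hbase, minorPoly_del _ M hbase,
      minorPoly_del _ M hbase, minorPoly_del _ M hbase]
    exact (main_step M h hf'.1 hg'.1 hfg hef heg y hy').2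


lemma isRayleigh_del_aux (D : Set α) :
    ∀ n (M : Matroid α), (M.E ∩ D).ncard = n → M.IsRayleigh → (M.del D).IsRayleigh := by
  intro n
  induction n using Nat.strong_induction_on with
  | _ n ih =>
    intro M hn hM
    by_cases hED : M.E ∩ D = ∅
    · rwa [del_eq_self M hED]
    · obtain ⟨e, he⟩ := Set.nonempty_iff_ne_empty.2 hED
      rw [del_del M he.2]
      have hlt : ((M.del {e}).E ∩ D).ncard < n := by
        have hset : ((M.del {e}).E ∩ D) = (M.E ∩ D) \ {e} := by
          show (M.E \ {e}) ∩ D = (M.E ∩ D) \ {e}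
          ext x
          simp only [Set.mem_inter_iff, Set.mem_diff, Set.mem_singleton_iff]
          tauto
        rw [hset, ← hn]
        exact Set.ncard_diff_singleton_lt_of_mem he (Set.toFinite _)
      exact ih _ hlt (M.del {e}) rfl (isRayleigh_del_singleton M hM e)

lemma isRayleigh_con_aux (C : Set α) :
    ∀ n (M : Matroid α), (M.E ∩ C).ncard = n → M.IsRayleigh → (M.con C).IsRayleigh := by
  intro n
  induction n using Nat.strong_induction_on with
  | _ n ih =>
    intro M hn hM
    by_cases hEC : M.E ∩ C = ∅
    · rwa [con_eq_self M hEC]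
    · obtain ⟨e, he⟩ := Set.nonempty_iff_ne_empty.2 hEC
      rw [con_con M he.2]
      have hlt : ((M.con {e}).E ∩ C).ncard < n := by
        have hset : ((M.con {e}).E ∩ C) = (M.E ∩ C) \ {e} := by
          show (M.E \ {e}) ∩ C = (M.E ∩ C) \ {e}
          ext x
          simp only [Set.mem_inter_iff, Set.mem_diff, Set.mem_singleton_iff]
          tauto
        rw [hset, ← hn]
        exact Set.ncard_diff_singleton_lt_of_mem he (Set.toFinite _)
      exact ih _ hlt (M.con {e}) rfl (isRayleigh_con_singleton M hM e)

end RayleighAux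

/-- If a matroid on a finite ground set is Rayleigh, then every minor of it is Rayleigh. -/
theorem minor_isRayleigh {α : Type*} [Fintype α] [DecidableEq α]
    (M N : Matroid α) (h : M.IsRayleigh) (hNM : N.IsMinorOf M) : N.IsRayleigh := by
  obtain ⟨C, D, rfl⟩ := hNM
  exact RayleighAux.isRayleigh_del_aux D _ _ rfl
    (RayleighAux.isRayleigh_con_aux C _ _ rfl h)
end

section
/- If M is a matroid of rank at most two on a finite ground set, then for all distinct ground-set elements e, f, every coefficient of the polynomial ΔM{e,f}(y) = M_e^f(y)·M_f^e(y) − M_{ef}(y)·M^{ef}(y) is nonnegative; consequently M is Rayleigh. -/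
open MvPolynomial
open scoped Classical

section Aux

set_option linter.unusedSectionVars false

variable {α : Type*} [Fintype α] [DecidableEq α]

/-- The exponent vector of the squarefree monomial with support `s`. -/
noncomputable def muSum (s : Finset α) : α →₀ ℕ := ∑ i ∈ s, Finsupp.single i 1

lemma muSum_apply (s : Finset α) (a : α) : muSum s a = if a ∈ s then 1 else 0 := by
  classical
  rw [muSum, Finsupp.finset_sum_apply]
  simp [Finsupp.single_apply, Finset.sum_ite_eq s a (fun _ => (1 : ℕ))]

lemma muSum_injective : Function.Injective (muSum (α := α)) := by
  intro s t h
  ext a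
  have := congrArg (fun g : α →₀ ℕ => g a) h
  simp only [muSum_apply] at this
  by_cases hs : a ∈ s <;> by_cases ht : a ∈ t <;> simp [hs, ht] at this ⊢

lemma prod_X_eq (s : Finset α) :
    (∏ i ∈ s, (X i : MvPolynomial α ℝ)) = monomial (muSum s) 1 := by
  classical
  induction s using Finset.induction_on with
  | empty => simp [muSum]
  | @insert a s h ih =>
      have hmu : muSum (insert a s) = Finsupp.single a 1 + muSum s := by
        rw [muSum, muSum, Finset.sum_insert h]
      rw [Finset.prod_insert h, ih, X, monomial_mul, one_mul, hmu]

lemma coeff_prod_X_nonneg (s : Finset α) (m : α →₀ ℕ) :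
    0 ≤ coeff m (∏ i ∈ s, (X i : MvPolynomial α ℝ)) := by
  rw [prod_X_eq, coeff_monomial]
  split <;> norm_num

lemma coeff_mul_nonneg {p q : MvPolynomial α ℝ}
    (hp : ∀ m, 0 ≤ coeff m p) (hq : ∀ m, 0 ≤ coeff m q) (m : α →₀ ℕ) :
    0 ≤ coeff m (p * q) := by
  rw [coeff_mul]
  exact Finset.sum_nonneg fun x _ => mul_nonneg (hp _) (hq _)

/-- The key exchange property for pairs of independent pairs. -/
lemma exchange_indep {M : Matroid α} {e f c d : α}
    (hef : M.Indep {e, f}) (hcd : M.Indep {c, d}) (hne : e ≠ f) (hcd' : c ≠ d)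
    (hce : c ≠ e) (hcf : c ≠ f) (hde : d ≠ e) (hdf : d ≠ f) :
    (M.Indep {e, c} ∧ M.Indep {f, d}) ∨ (M.Indep {e, d} ∧ M.Indep {f, c}) := by
  have he : M.Indep {e} := hef.subset (by simp)
  have hf : M.Indep {f} := hef.subset (by simp)
  have hc : M.Indep {c} := hcd.subset (by simp)
  have hd : M.Indep {d} := hcd.subset (by simp)
  have hlt1 : ({e} : Set α).encard < ({c, d} : Set α).encard := by
    rw [Set.encard_singleton, Set.encard_pair hcd']; norm_num
  have hlt2 : ({f} : Set α).encard < ({c, d} : Set α).encard := by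
    rw [Set.encard_singleton, Set.encard_pair hcd']; norm_num
  have hlt3 : ({c} : Set α).encard < ({e, f} : Set α).encard := by
    rw [Set.encard_singleton, Set.encard_pair hne]; norm_num
  have hlt4 : ({d} : Set α).encard < ({e, f} : Set α).encard := by
    rw [Set.encard_singleton, Set.encard_pair hne]; norm_num
  have pc : ∀ a b : α, M.Indep {a, b} → M.Indep {b, a} := fun a b h => by
    rwa [Set.pair_comm] at h
  by_cases h1 : M.Indep {e, c}
  · by_cases h2 : M.Indep {f, d}
    · exact Or.inl ⟨h1, h2⟩
    right
    have hfc : M.Indep {f, c} := by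
      obtain ⟨x, hx, hxi⟩ := hf.augment hcd hlt2
      rcases Set.mem_insert_iff.mp hx.1 with rfl | hx'
      · exact pc _ _ hxi
      · rw [Set.mem_singleton_iff] at hx'; subst hx'
        exact absurd (pc _ _ hxi) h2
    have hed : M.Indep {e, d} := by
      obtain ⟨x, hx, hxi⟩ := hd.augment hef hlt4
      rcases Set.mem_insert_iff.mp hx.1 with rfl | hx'
      · exact hxi
      · rw [Set.mem_singleton_iff] at hx'; subst hx'
        exact absurd hxi h2
    exact ⟨hed, hfc⟩
  · right
    have hed : M.Indep {e, d} := by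
      obtain ⟨x, hx, hxi⟩ := he.augment hcd hlt1
      rcases Set.mem_insert_iff.mp hx.1 with rfl | hx'
      · exact absurd (pc _ _ hxi) h1
      · rw [Set.mem_singleton_iff] at hx'; subst hx'
        exact pc _ _ hxi
    have hfc : M.Indep {f, c} := by
      obtain ⟨x, hx, hxi⟩ := hc.augment hef hlt3
      rcases Set.mem_insert_iff.mp hx.1 with rfl | hx'
      · exact absurd hxi h1
      · rw [Set.mem_singleton_iff] at hx'; subst hx'
        exact hxi
    exact ⟨hed, hfc⟩

end Aux

lemma minorPoly_coeff_nonneg {α : Type*} [Fintype α] [DecidableEq α]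
    (M : Matroid α) (I J : Finset α) (m : α →₀ ℕ) :
    0 ≤ coeff m (M.minorPoly I J) := by
  rw [Matroid.minorPoly, coeff_sum]
  exact Finset.sum_nonneg fun B _ => coeff_prod_X_nonneg _ _

/-- If `M` has rank at most two, then for all distinct ground set elements `e, f`,
every coefficient of `ΔM{e,f}` is nonnegative; consequently `M` is Rayleigh. -/
theorem rank_le_two_rayleighDiff_coeff_nonneg {α : Type*} [Fintype α] [DecidableEq α]
    (M : Matroid α) (hr : ∀ B : Set α, M.IsBase B → B.ncard ≤ 2) :
    (∀ e ∈ M.E, ∀ f ∈ M.E, e ≠ f →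
      ∀ m : α →₀ ℕ, 0 ≤ (M.rayleighDiff e f).coeff m) ∧ M.IsRayleigh := by
  have hcoeff : ∀ e ∈ M.E, ∀ f ∈ M.E, e ≠ f →
      ∀ m : α →₀ ℕ, 0 ≤ (M.rayleighDiff e f).coeff m := by
    intro e _ f _ hef m
    by_cases hB0 : ∃ B : Finset α, M.IsBase (B : Set α) ∧ e ∈ B ∧ f ∈ B
    · -- there is a base containing both e and f
      obtain ⟨B₀, hB₀, heB₀, hfB₀⟩ := hB0
      have hsub : ({e, f} : Set α) ⊆ (B₀ : Set α) :=
        Set.insert_subset (Finset.mem_coe.mpr heB₀)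
          (Set.singleton_subset_iff.mpr (Finset.mem_coe.mpr hfB₀))
      have hB₀le : (B₀ : Set α).encard ≤ ({e, f} : Set α).encard := by
        rw [Set.encard_coe_eq_coe_finsetCard, Set.encard_pair hef]
        have h2 : B₀.card ≤ 2 := by
          have := hr _ hB₀
          rwa [Set.ncard_coe_finset] at this
        exact_mod_cast h2
      have hB₀eq : (B₀ : Set α) = {e, f} :=
        ((Set.toFinite _).eq_of_subset_of_encard_le hsub hB₀le).symm
      have hbaseE : M.IsBase ({e, f} : Set α) := hB₀eq ▸ hB₀
      have hcard2 : ∀ B : Finset α, M.IsBase (B : Set α) → B.card = 2 := by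
        intro B hB
        have h := hB.encard_eq_encard_of_isBase hbaseE
        rw [Set.encard_coe_eq_coe_finsetCard, Set.encard_pair hef] at h
        exact_mod_cast h
      have hbase_of_indep : ∀ x z : α, x ≠ z → M.Indep {x, z} → M.IsBase ({x, z} : Set α) := by
        intro x z hxz hind
        obtain ⟨B, hB, hsubB⟩ := hind.exists_isBase_superset
        have hBe : B.encard = 2 := by
          rw [hB.encard_eq_encard_of_isBase hbaseE, Set.encard_pair hef]
        have hBeq : ({x, z} : Set α) = B := by
          refine (Set.toFinite _).eq_of_subset_of_encard_le hsubB ?_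
          rw [hBe, Set.encard_pair hxz]
        rwa [← hBeq] at hB
      have hMef : M.minorPoly {e, f} ∅ = 1 := by
        have hfilt : Finset.univ.filter
            (fun B : Finset α => M.IsBase (B : Set α) ∧ ({e, f} : Finset α) ⊆ B ∧
              Disjoint B (∅ : Finset α)) = {({e, f} : Finset α)} := by
          ext B
          simp only [Finset.mem_filter, Finset.mem_univ, true_and, Finset.mem_singleton,
            Finset.disjoint_empty_right, and_true]
          constructor
          · rintro ⟨hB, hsubB⟩
            have h1 : ({e, f} : Set α) ⊆ (B : Set α) := by
              have := Finset.coe_subset.mpr hsubB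
              simpa using this
            have h2 : (B : Set α) = {e, f} := by
              refine ((Set.toFinite _).eq_of_subset_of_encard_le h1 ?_).symm
              rw [Set.encard_coe_eq_coe_finsetCard, Set.encard_pair hef, hcard2 B hB]
              exact_mod_cast le_rfl
            apply Finset.coe_injective
            simpa using h2
          · rintro rfl
            exact ⟨by simpa using hbaseE, subset_rfl⟩
        rw [Matroid.minorPoly, hfilt, Finset.sum_singleton, Finset.sdiff_self,
          Finset.prod_empty]
      unfold Matroid.rayleighDiff
      rw [hMef, one_mul, coeff_sub, sub_nonneg]
      have hT : coeff m (M.minorPoly ∅ {e, f}) = ∑ B ∈ Finset.univ.filter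
          (fun B : Finset α => M.IsBase (B : Set α) ∧ (∅ : Finset α) ⊆ B ∧
            Disjoint B ({e, f} : Finset α)), (if muSum B = m then (1 : ℝ) else 0) := by
        rw [Matroid.minorPoly, coeff_sum]
        refine Finset.sum_congr rfl fun B _ => ?_
        rw [Finset.sdiff_empty, prod_X_eq, coeff_monomial]
      by_cases hw : ∃ B ∈ Finset.univ.filter
          (fun B : Finset α => M.IsBase (B : Set α) ∧ (∅ : Finset α) ⊆ B ∧
            Disjoint B ({e, f} : Finset α)), muSum B = m
      · obtain ⟨B, hBT, hmu⟩ := hw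
        have hT1 : coeff m (M.minorPoly ∅ {e, f}) = 1 := by
          rw [hT, Finset.sum_eq_single_of_mem B hBT, if_pos hmu]
          intro b _ hne'
          rw [if_neg]
          intro hbm
          exact hne' (muSum_injective (hbm.trans hmu.symm))
        rw [hT1]
        obtain hBfil := Finset.mem_filter.mp hBT
        have hBbase := hBfil.2.1
        have hdisj := hBfil.2.2.2
        obtain ⟨c, d, hcd', hBcd⟩ := Finset.card_eq_two.mp (hcard2 B hBbase)
        subst hBcd
        have hcnot : c ∉ ({e, f} : Finset α) := Finset.disjoint_left.mp hdisj (by simp)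
        have hdnot : d ∉ ({e, f} : Finset α) := Finset.disjoint_left.mp hdisj (by simp)
        simp only [Finset.mem_insert, Finset.mem_singleton, not_or] at hcnot hdnot
        have hindcd : M.Indep ({c, d} : Set α) := by simpa using hBbase.indep
        have hm' : m = Finsupp.single c 1 + Finsupp.single d 1 := by
          rw [← hmu, muSum, Finset.sum_pair hcd']
        have key : ∀ c' d' : α, c' ≠ e → c' ≠ f → d' ≠ e → d' ≠ f →
            m = Finsupp.single c' 1 + Finsupp.single d' 1 →
            M.Indep {e, c'} → M.Indep {f, d'} →
            (1 : ℝ) ≤ coeff m (M.minorPoly {e} {f} * M.minorPoly {f} {e}) := by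
          intro c' d' hc'e hc'f hd'e hd'f hm h1 h2
          have hb1 : M.IsBase ({e, c'} : Set α) := hbase_of_indep e c' (Ne.symm hc'e) h1
          have hb2 : M.IsBase ({f, d'} : Set α) := hbase_of_indep f d' (Ne.symm hd'f) h2
          have hmem1 : ({e, c'} : Finset α) ∈ Finset.univ.filter
              (fun B : Finset α => M.IsBase (B : Set α) ∧ ({e} : Finset α) ⊆ B ∧
                Disjoint B ({f} : Finset α)) := by
            simp only [Finset.mem_filter, Finset.mem_univ, true_and]
            refine ⟨by simpa using hb1, by simp, ?_⟩
            rw [Finset.disjoint_singleton_right]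
            simp [Ne.symm hef, Ne.symm hc'f]
          have hmem2 : ({f, d'} : Finset α) ∈ Finset.univ.filter
              (fun B : Finset α => M.IsBase (B : Set α) ∧ ({f} : Finset α) ⊆ B ∧
                Disjoint B ({e} : Finset α)) := by
            simp only [Finset.mem_filter, Finset.mem_univ, true_and]
            refine ⟨by simpa using hb2, by simp, ?_⟩
            rw [Finset.disjoint_singleton_right]
            simp [hef, Ne.symm hd'e]
          have hterm1 : (∏ x ∈ ({e, c'} : Finset α) \ {e}, (X x : MvPolynomial α ℝ)) = X c' := by
            have hs : ({e, c'} : Finset α) \ {e} = {c'} := by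
              ext x
              simp only [Finset.mem_sdiff, Finset.mem_insert, Finset.mem_singleton]
              constructor
              · rintro ⟨h | h, hx⟩
                · exact absurd h hx
                · exact h
              · rintro rfl
                exact ⟨Or.inr rfl, hc'e⟩
            rw [hs, Finset.prod_singleton]
          have hterm2 : (∏ x ∈ ({f, d'} : Finset α) \ {f}, (X x : MvPolynomial α ℝ)) = X d' := by
            have hs : ({f, d'} : Finset α) \ {f} = {d'} := by
              ext x
              simp only [Finset.mem_sdiff, Finset.mem_insert, Finset.mem_singleton]
              constructor
              · rintro ⟨h | h, hx⟩
                · exact absurd h hx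
                · exact h
              · rintro rfl
                exact ⟨Or.inr rfl, hd'f⟩
            rw [hs, Finset.prod_singleton]
          conv_rhs => rw [Matroid.minorPoly]
          rw [Finset.sum_mul, coeff_sum]
          refine le_trans ?_ (Finset.single_le_sum
            (f := fun B => coeff m ((∏ x ∈ B \ ({e} : Finset α), (X x : MvPolynomial α ℝ)) *
              M.minorPoly {f} {e}))
            (fun B _ => coeff_mul_nonneg (fun n => coeff_prod_X_nonneg _ _)
              (minorPoly_coeff_nonneg M _ _) m) hmem1)
          rw [hterm1]
          conv_rhs => rw [Matroid.minorPoly]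
          rw [Finset.mul_sum, coeff_sum]
          refine le_trans ?_ (Finset.single_le_sum
            (f := fun B => coeff m ((X c' : MvPolynomial α ℝ) *
              ∏ x ∈ B \ ({f} : Finset α), (X x : MvPolynomial α ℝ)))
            (fun B _ => coeff_mul_nonneg
              (fun n => by rw [← Finset.prod_singleton (f := fun i => (X i : MvPolynomial α ℝ)) (a := c')]; exact coeff_prod_X_nonneg _ _)
              (fun n => coeff_prod_X_nonneg _ _) m) hmem2)
          rw [hterm2, X, X, monomial_mul, one_mul, coeff_monomial, if_pos hm.symm]
        rcases exchange_indep hbaseE.indep hindcd hef hcd' hcnot.1 hcnot.2 hdnot.1 hdnot.2 with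
          ⟨h1, h2⟩ | ⟨h1, h2⟩
        · exact key c d hcnot.1 hcnot.2 hdnot.1 hdnot.2 hm' h1 h2
        · exact key d c hdnot.1 hdnot.2 hcnot.1 hcnot.2 (by rw [hm', add_comm]) h1 h2
      · have hT0 : coeff m (M.minorPoly ∅ {e, f}) = 0 := by
          rw [hT]
          refine Finset.sum_eq_zero fun B hB => ?_
          rw [if_neg fun h => hw ⟨B, hB, h⟩]
        rw [hT0]
        exact coeff_mul_nonneg (minorPoly_coeff_nonneg M _ _) (minorPoly_coeff_nonneg M _ _) m
    · -- no base contains both e and f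
      have h0 : M.minorPoly {e, f} ∅ = 0 := by
        rw [Matroid.minorPoly]
        refine Finset.sum_eq_zero fun B hB => ?_
        rw [Finset.mem_filter] at hB
        exact absurd ⟨B, hB.2.1, hB.2.2.1 (by simp), hB.2.2.1 (by simp)⟩ hB0
      unfold Matroid.rayleighDiff
      rw [h0, zero_mul, sub_zero]
      exact coeff_mul_nonneg (minorPoly_coeff_nonneg M _ _) (minorPoly_coeff_nonneg M _ _) m
  refine ⟨hcoeff, ?_⟩
  intro e he f hf hef y hy
  set y' : α → ℝ := fun c => if c ∈ M.E then y c else 1 with hy'def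
  have hy'pos : ∀ c, 0 < y' c := by
    intro c
    by_cases h : c ∈ M.E
    · simpa [y', h] using hy c h
    · simp [y', h]
  have heval : ∀ I J : Finset α, eval y (M.minorPoly I J) = eval y' (M.minorPoly I J) := by
    intro I J
    rw [Matroid.minorPoly, map_sum, map_sum]
    refine Finset.sum_congr rfl fun B hB => ?_
    rw [map_prod, map_prod]
    refine Finset.prod_congr rfl fun c hc => ?_
    have hcE : c ∈ M.E := by
      have hBb : M.IsBase (B : Set α) := (Finset.mem_filter.mp hB).2.1
      exact hBb.subset_ground (Finset.mem_coe.mpr (Finset.mem_sdiff.mp hc).1)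
    simp [y', eval_X, hcE]
  have hev : eval y (M.rayleighDiff e f) = eval y' (M.rayleighDiff e f) := by
    unfold Matroid.rayleighDiff
    rw [map_sub, map_sub, map_mul, map_mul, map_mul, map_mul, heval, heval, heval, heval]
  rw [hev, eval_eq]
  refine Finset.sum_nonneg fun d _ => ?_
  exact mul_nonneg (hcoeff e he f hf hef d)
    (Finset.prod_nonneg fun i _ => pow_nonneg (hy'pos i).le _)
end

section
/- For a matroid M on a finite ground set E and distinct elements e, f, g ∈ E, the Rayleigh difference decomposes as ΔM{e,f} = y_g²·ΔM_g{e,f} + y_g·ΘM{e,f|g} + ΔM^g{e,f}, where ΔM_g{e,f} := M_{eg}^f·M_{fg}^e − M_{efg}·M_g^{ef}, ΔM^g{e,f} := M_e^{fg}·M_f^{eg} − M_{ef}^g·M^{efg}, and ΘM{e,f|g} := M_e^{fg}·M_{fg}^e + M_f^{eg}·M_{eg}^f − M_g^{ef}·M_{ef}^g − M_{efg}·M^{efg}. -/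
open MvPolynomial
open scoped Classical

lemma minorPoly_split {α : Type*} [Fintype α] [DecidableEq α]
    (M : Matroid α) (I J : Finset α) (g : α) (hgI : g ∉ I) (hgJ : g ∉ J) :
    M.minorPoly I J = X g * M.minorPoly (insert g I) J + M.minorPoly I (insert g J) := by
  classical
  unfold Matroid.minorPoly
  rw [← Finset.sum_filter_add_sum_filter_not
    (Finset.univ.filter (fun B : Finset α => M.IsBase (B : Set α) ∧ I ⊆ B ∧ Disjoint B J))
    (fun B => g ∈ B)]
  congr 1
  · rw [Finset.mul_sum]
    rw [Finset.filter_filter]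
    apply Finset.sum_congr
    · ext B
      simp only [Finset.mem_filter, Finset.mem_univ, true_and, Finset.insert_subset_iff]
      tauto
    · intro B hB
      simp only [Finset.mem_filter, Finset.mem_univ, true_and, Finset.insert_subset_iff] at hB
      have h1 : B \ I = insert g (B \ insert g I) := by
        ext x
        simp only [Finset.mem_sdiff, Finset.mem_insert]
        constructor
        · rintro ⟨hxB, hxI⟩
          by_cases hx : x = g
          · exact Or.inl hx
          · exact Or.inr ⟨hxB, by simp [hx, hxI]⟩
        · rintro (rfl | ⟨hxB, hx⟩)
          · exact ⟨hB.2.1.1, hgI⟩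
          · exact ⟨hxB, fun h => hx (Or.inr h)⟩
      rw [h1, Finset.prod_insert (by simp)]
  · rw [Finset.filter_filter]
    apply Finset.sum_congr _ (fun _ _ => rfl)
    ext B
    simp only [Finset.mem_filter, Finset.mem_univ, true_and, Finset.disjoint_insert_right]
    tauto

/-- For distinct `e, f, g`, the Rayleigh difference decomposes as
`ΔM{e,f} = y_g²·ΔM_g{e,f} + y_g·ΘM{e,f|g} + ΔM^g{e,f}`, where
`ΔM_g{e,f} = M_{eg}^f·M_{fg}^e − M_{efg}·M_g^{ef}`,
`ΔM^g{e,f} = M_e^{fg}·M_f^{eg} − M_{ef}^g·M^{efg}`, and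
`ΘM{e,f|g} = M_e^{fg}·M_{fg}^e + M_f^{eg}·M_{eg}^f − M_g^{ef}·M_{ef}^g − M_{efg}·M^{efg}`. -/
theorem rayleighDiff_decomposition {α : Type*} [Fintype α] [DecidableEq α]
    (M : Matroid α) (e f g : α) (hef : e ≠ f) (heg : e ≠ g) (hfg : f ≠ g) :
    M.rayleighDiff e f =
      X g ^ 2 *
        (M.minorPoly {e, g} {f} * M.minorPoly {f, g} {e}
          - M.minorPoly {e, f, g} ∅ * M.minorPoly {g} {e, f})
      + X g *
        (M.minorPoly {e} {f, g} * M.minorPoly {f, g} {e}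
          + M.minorPoly {f} {e, g} * M.minorPoly {e, g} {f}
          - M.minorPoly {g} {e, f} * M.minorPoly {e, f} {g}
          - M.minorPoly {e, f, g} ∅ * M.minorPoly ∅ {e, f, g})
      + (M.minorPoly {e} {f, g} * M.minorPoly {f} {e, g}
          - M.minorPoly {e, f} {g} * M.minorPoly ∅ {e, f, g}) := by
  have h1 : M.minorPoly {e} {f} = X g * M.minorPoly {e, g} {f} + M.minorPoly {e} {f, g} := by
    have := minorPoly_split M {e} {f} g (by simp [Ne.symm heg]) (by simp [Ne.symm hfg])
    rwa [show insert g ({e} : Finset α) = {e, g} by rw [Finset.pair_comm],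
      show insert g ({f} : Finset α) = {f, g} by rw [Finset.pair_comm]] at this
  have h2 : M.minorPoly {f} {e} = X g * M.minorPoly {f, g} {e} + M.minorPoly {f} {e, g} := by
    have := minorPoly_split M {f} {e} g (by simp [Ne.symm hfg]) (by simp [Ne.symm heg])
    rwa [show insert g ({f} : Finset α) = {f, g} by rw [Finset.pair_comm],
      show insert g ({e} : Finset α) = {e, g} by rw [Finset.pair_comm]] at this
  have h3 : M.minorPoly {e, f} ∅ = X g * M.minorPoly {e, f, g} ∅ + M.minorPoly {e, f} {g} := by
    have := minorPoly_split M {e, f} ∅ g (by simp [Ne.symm heg, Ne.symm hfg]) (by simp)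
    rwa [show insert g ({e, f} : Finset α) = {e, f, g} by
      ext x; simp only [Finset.mem_insert, Finset.mem_singleton]; tauto,
      show insert g (∅ : Finset α) = {g} from rfl] at this
  have h4 : M.minorPoly ∅ {e, f} = X g * M.minorPoly {g} {e, f} + M.minorPoly ∅ {e, f, g} := by
    have := minorPoly_split M ∅ {e, f} g (by simp) (by simp [Ne.symm heg, Ne.symm hfg])
    rwa [show insert g (∅ : Finset α) = {g} from rfl,
      show insert g ({e, f} : Finset α) = {e, f, g} by
        ext x; simp only [Finset.mem_insert, Finset.mem_singleton]; tauto] at this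
  unfold Matroid.rayleighDiff
  rw [h1, h2, h3, h4]
  ring
end

section
/- Let M be a matroid on a finite ground set E and let e, f, g ∈ E be distinct elements such that the set {e, f, g} is dependent in M. Then every coefficient of the central term ΘM{e,f|g} := M_e^{fg}·M_{fg}^e + M_f^{eg}·M_{eg}^f − M_g^{ef}·M_{ef}^g − M_{efg}·M^{efg} is nonnegative. -/
open MvPolynomial
open scoped Classical

namespace CentralAux

variable {α : Type*} [Fintype α] [DecidableEq α]

/-- The exponent of the monomial contributed by the basis `B` in `M.minorPoly I J`. -/
noncomputable def expo (I B : Finset α) : α →₀ ℕ := ∑ a ∈ B \ I, Finsupp.single a 1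

lemma prod_X_eq (s : Finset α) :
    (∏ a ∈ s, (X a : MvPolynomial α ℝ)) = monomial (∑ a ∈ s, Finsupp.single a 1) 1 := by
  induction s using Finset.cons_induction with
  | empty => simp
  | cons a s ha ih =>
      rw [Finset.prod_cons, Finset.sum_cons, ih, X, monomial_mul, one_mul]

/-- The set of bases indexing `M.minorPoly I J`. -/
noncomputable def bSet (M : Matroid α) (I J : Finset α) : Finset (Finset α) :=
  Finset.univ.filter fun B : Finset α => M.IsBase (B : Set α) ∧ I ⊆ B ∧ Disjoint B J

lemma mem_bSet {M : Matroid α} {I J B : Finset α} :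
    B ∈ bSet M I J ↔ M.IsBase (B : Set α) ∧ I ⊆ B ∧ Disjoint B J := by
  simp [bSet]

lemma minorPoly_eq (M : Matroid α) (I J : Finset α) :
    M.minorPoly I J = ∑ B ∈ bSet M I J, monomial (expo I B) 1 :=
  Finset.sum_congr rfl fun B _ => prod_X_eq _

/-- The pairs of bases contributing the monomial `μ` to a product of two minor polys. -/
noncomputable def pairSet (M : Matroid α) (I J I' J' : Finset α) (μ : α →₀ ℕ) :
    Finset (Finset α × Finset α) :=
  (bSet M I J ×ˢ bSet M I' J').filter fun p => expo I p.1 + expo I' p.2 = μ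

lemma mem_pairSet {M : Matroid α} {I J I' J' : Finset α} {μ : α →₀ ℕ}
    {p : Finset α × Finset α} :
    p ∈ pairSet M I J I' J' μ ↔
      p.1 ∈ bSet M I J ∧ p.2 ∈ bSet M I' J' ∧ expo I p.1 + expo I' p.2 = μ := by
  rw [pairSet, Finset.mem_filter, Finset.mem_product]
  tauto

lemma coeff_minor_mul (M : Matroid α) (I J I' J' : Finset α) (μ : α →₀ ℕ) :
    (M.minorPoly I J * M.minorPoly I' J').coeff μ
      = ((pairSet M I J I' J' μ).card : ℝ) := by
  rw [minorPoly_eq M I J, minorPoly_eq M I' J', Finset.sum_mul_sum]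
  simp_rw [monomial_mul, one_mul]
  rw [pairSet, ← Finset.sum_boole, ← Finset.sum_product']
  rw [coeff_sum]
  refine Finset.sum_congr rfl fun p _ => ?_
  rw [coeff_monomial]

end CentralAux

section Exchange

variable {α : Type*}

open Set

/-- The key exchange lemma: if `{e,f,g}` is dependent, `B₁` is a base containing `g`
but not `e,f`, and `B₂` is a base containing `e,f` but not `g`, then `g` can be
symmetrically exchanged with `e` or with `f`. -/
lemma exchange_key (M : Matroid α) {e f g : α}
    (hef : e ≠ f) (heg : e ≠ g) (hfg : f ≠ g)
    (hdep : M.Dep {e, f, g}) {B₁ B₂ : Set α}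
    (hB₁ : M.IsBase B₁) (hB₂ : M.IsBase B₂)
    (hg1 : g ∈ B₁) (he1 : e ∉ B₁) (hf1 : f ∉ B₁)
    (he2 : e ∈ B₂) (hf2 : f ∈ B₂) (hg2 : g ∉ B₂) :
    (M.IsBase (insert e (B₁ \ {g})) ∧ M.IsBase (insert g (B₂ \ {e}))) ∨
    (M.IsBase (insert f (B₁ \ {g})) ∧ M.IsBase (insert g (B₂ \ {f}))) := by
  have heE : e ∈ M.E := hB₂.subset_ground he2
  have hfE : f ∈ M.E := hB₂.subset_ground hf2
  have hgE : g ∈ M.E := hB₁.subset_ground hg1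
  have hIef : M.Indep {e, f} := hB₂.indep.subset (by
    rintro x (rfl | rfl)
    exacts [he2, hf2])
  have hIg : M.Indep {g} := hB₁.indep.subset (by simp [hg1])
  have hIe : M.Indep {e} := hIef.subset (by simp)
  have hIf : M.Indep {f} := hIef.subset (by simp)
  -- B₁ side generalities
  have hK : M.closure (B₁ \ {g}) ∩ B₁ = B₁ \ {g} :=
    hB₁.indep.closure_inter_eq_self_of_subset diff_subset
  have hgK : g ∉ M.closure (B₁ \ {g}) := by
    intro h
    have : g ∈ B₁ \ {g} := hK ▸ Set.mem_inter h hg1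
    simp at this
  have b1side : ∀ x, x ∈ M.E → x ∉ B₁ → x ∉ M.closure (B₁ \ {g}) →
      M.IsBase (insert x (B₁ \ {g})) := by
    intro x hxE hx1 hxK
    refine hB₁.exchange_isBase_of_indep hx1 ?_
    have hI : M.Indep (B₁ \ {g}) := hB₁.indep.subset diff_subset
    rw [hI.insert_indep_iff_of_notMem (fun h => hx1 h.1)]
    exact ⟨hxE, hxK⟩
  -- B₂ side generalities
  have b2side : ∀ x y, x ∈ B₂ → y ∈ B₂ \ ({x} : Set α) → x ∈ M.closure {y, g} →
      M.IsBase (insert g (B₂ \ {x})) := by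
    intro x y hx hy hxcl
    refine hB₂.exchange_isBase_of_indep hg2 ?_
    have hI : M.Indep (B₂ \ {x}) := hB₂.indep.subset diff_subset
    by_contra hdep'
    have hgcl : g ∈ M.closure (B₂ \ {x}) := by
      rw [hI.mem_closure_iff_of_notMem (fun h => hg2 h.1)]
      exact Matroid.dep_iff.mpr
        ⟨hdep', insert_subset hgE (diff_subset.trans hB₂.subset_ground)⟩
    have hsub : ({y, g} : Set α) ⊆ M.closure (B₂ \ {x}) := by
      rintro z (rfl | rfl)
      · exact M.subset_closure _ (diff_subset.trans hB₂.subset_ground) hy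
      · exact hgcl
    have hxcl' : x ∈ M.closure (B₂ \ {x}) :=
      (M.closure_subset_closure_of_subset_closure hsub) hxcl
    have : x ∈ B₂ \ ({x} : Set α) := by
      have hKx : M.closure (B₂ \ {x}) ∩ B₂ = B₂ \ {x} :=
        hB₂.indep.closure_inter_eq_self_of_subset diff_subset
      exact hKx ▸ Set.mem_inter hxcl' hx
    simp at this
  -- dependence of a pair gives closure membership
  have pair_cl : ∀ x y : α, x ≠ y → M.Indep {y} → x ∈ M.E → ¬ M.Indep {x, y} →
      x ∈ M.closure {y} := by
    intro x y hxy hIy hxE hd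
    rw [hIy.mem_closure_iff_of_notMem (by simp [hxy])]
    exact Matroid.dep_iff.mpr ⟨hd, insert_subset hxE hIy.subset_ground⟩
  by_cases hIfg : M.Indep ({f, g} : Set α)
  · by_cases hIeg : M.Indep ({e, g} : Set α)
    · -- all pairs independent
      have hecl : e ∈ M.closure {f, g} := by
        rw [hIfg.mem_closure_iff_of_notMem (by simp [hef, heg])]
        exact hdep
      have hfcl : f ∈ M.closure {e, g} := by
        rw [hIeg.mem_closure_iff_of_notMem (by simp [hef.symm, hfg])]
        have h : (insert f {e, g} : Set α) = {e, f, g} := by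
          ext x; simp; tauto
        rw [h]; exact hdep
      have hgcl : g ∈ M.closure {e, f} := by
        rw [hIef.mem_closure_iff_of_notMem (by simp [heg.symm, hfg.symm])]
        have h : (insert g {e, f} : Set α) = {e, f, g} := by
          ext x; simp; tauto
        rw [h]; exact hdep
      by_cases heK : e ∈ M.closure (B₁ \ {g})
      · have hfK : f ∉ M.closure (B₁ \ {g}) := by
          intro hfK
          apply hgK
          have hsub : ({e, f} : Set α) ⊆ M.closure (B₁ \ {g}) := by
            rintro z (rfl | rfl)
            exacts [heK, hfK]
          exact (M.closure_subset_closure_of_subset_closure hsub) hgcl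
        exact Or.inr ⟨b1side f hfE hf1 hfK,
          b2side f e hf2 ⟨he2, by simp [hef]⟩ hfcl⟩
      · exact Or.inl ⟨b1side e heE he1 heK,
          b2side e f he2 ⟨hf2, by simp [hef.symm]⟩ hecl⟩
    · -- {e, g} dependent: exchange with e
      have he_g : e ∈ M.closure {g} := pair_cl e g heg hIg heE hIeg
      have hg_e : g ∈ M.closure {e} := pair_cl g e (Ne.symm heg) hIe hgE
        (by rwa [Set.pair_comm])
      have heK : e ∉ M.closure (B₁ \ {g}) := by
        intro h
        exact hgK ((M.closure_subset_closure_of_subset_closure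
          (Set.singleton_subset_iff.mpr h)) hg_e)
      have hecl : e ∈ M.closure {f, g} :=
        M.closure_subset_closure (by simp) he_g
      exact Or.inl ⟨b1side e heE he1 heK,
        b2side e f he2 ⟨hf2, by simp [hef.symm]⟩ hecl⟩
  · by_cases hIeg : M.Indep ({e, g} : Set α)
    · -- {f, g} dependent: exchange with f
      have hf_g : f ∈ M.closure {g} := pair_cl f g hfg hIg hfE hIfg
      have hg_f : g ∈ M.closure {f} := pair_cl g f (Ne.symm hfg) hIf hgE
        (by rwa [Set.pair_comm])
      have hfK : f ∉ M.closure (B₁ \ {g}) := by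
        intro h
        exact hgK ((M.closure_subset_closure_of_subset_closure
          (Set.singleton_subset_iff.mpr h)) hg_f)
      have hfcl : f ∈ M.closure {e, g} :=
        M.closure_subset_closure (by simp) hf_g
      exact Or.inr ⟨b1side f hfE hf1 hfK,
        b2side f e hf2 ⟨he2, by simp [hef]⟩ hfcl⟩
    · -- both pairs dependent: contradiction with `{e, f}` independent
      exfalso
      have he_g : e ∈ M.closure {g} := pair_cl e g heg hIg heE hIeg
      have hg_f : g ∈ M.closure {f} := pair_cl g f (Ne.symm hfg) hIf hgE
        (by rwa [Set.pair_comm])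
      have he_f : e ∈ M.closure {f} :=
        (M.closure_subset_closure_of_subset_closure
          (Set.singleton_subset_iff.mpr hg_f)) he_g
      exact ((hIf.insert_indep_iff_of_notMem (by simp [hef])).mp hIef).2 he_f

end Exchange

namespace CentralAux

variable {α : Type*} [Fintype α] [DecidableEq α]

lemma mem_facts {M : Matroid α} {e f g : α} {μ : α →₀ ℕ}
    (hef : e ≠ f) (heg : e ≠ g) (hfg : f ≠ g)
    {p : Finset α × Finset α} (hp : p ∈ pairSet M {g} {e, f} {e, f} {g} μ) :
    M.IsBase (p.1 : Set α) ∧ M.IsBase (p.2 : Set α) ∧ g ∈ p.1 ∧ e ∉ p.1 ∧ f ∉ p.1 ∧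
      e ∈ p.2 ∧ f ∈ p.2 ∧ g ∉ p.2 ∧ expo {g} p.1 + expo {e, f} p.2 = μ := by
  rw [mem_pairSet, mem_bSet, mem_bSet] at hp
  obtain ⟨⟨hB1, hgsub, hdisj1⟩, ⟨hB2, hefsub, hdisj2⟩, hμ⟩ := hp
  refine ⟨hB1, hB2, hgsub (Finset.mem_singleton_self g), ?_, ?_, hefsub (by simp),
    hefsub (by simp), ?_, hμ⟩
  · exact fun h => (Finset.disjoint_left.mp hdisj1 h) (by simp)
  · exact fun h => (Finset.disjoint_left.mp hdisj1 h) (by simp)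
  · exact fun h => (Finset.disjoint_left.mp hdisj2 h) (by simp)

/-- The `e`-exchange condition on a pair of bases. -/
def condE (M : Matroid α) (e g : α) (p : Finset α × Finset α) : Prop :=
  M.IsBase ((insert e (p.1.erase g) : Finset α) : Set α) ∧
  M.IsBase ((insert g (p.2.erase e) : Finset α) : Set α)

/-- The injection step: if every pair in a subfamily of the `g`-pairs admits an
`e`-exchange, then that subfamily is no larger than the family of `e`-pairs. -/
lemma filter_card_le {M : Matroid α} {e f g : α}
    (hef : e ≠ f) (heg : e ≠ g) (hfg : f ≠ g) {μ : α →₀ ℕ}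
    (P : Finset α × Finset α → Prop) [DecidablePred P]
    (hP : ∀ p ∈ (pairSet M {g} {e, f} {e, f} {g} μ).filter P,
        M.IsBase ((insert e (p.1.erase g) : Finset α) : Set α) ∧
        M.IsBase ((insert g (p.2.erase e) : Finset α) : Set α)) :
    ((pairSet M {g} {e, f} {e, f} {g} μ).filter P).card
      ≤ (pairSet M {e} {f, g} {f, g} {e} μ).card := by
  apply Finset.card_le_card_of_injOn
    (fun p => (insert e (p.1.erase g), insert g (p.2.erase e)))
  · intro p hp
    obtain ⟨hbase1, hbase2⟩ := hP p hp
    obtain ⟨-, -, hg1, he1, hf1, he2, hf2, hg2, hμ⟩ :=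
      mem_facts hef heg hfg (Finset.mem_filter.mp hp).1
    rw [Finset.mem_coe, mem_pairSet, mem_bSet, mem_bSet]
    refine ⟨⟨hbase1, by simp, ?_⟩, ⟨hbase2, ?_, ?_⟩, ?_⟩
    · rw [Finset.disjoint_left]
      intro a ha hafg
      rw [Finset.mem_insert] at ha
      rw [Finset.mem_insert, Finset.mem_singleton] at hafg
      rcases ha with rfl | ha
      · rcases hafg with rfl | rfl
        exacts [hef rfl, heg rfl]
      · rw [Finset.mem_erase] at ha
        rcases hafg with rfl | rfl
        exacts [hf1 ha.2, ha.1 rfl]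
    · intro a ha
      rw [Finset.mem_insert, Finset.mem_singleton] at ha
      rcases ha with rfl | rfl
      · exact Finset.mem_insert_of_mem (Finset.mem_erase.mpr ⟨Ne.symm hef, hf2⟩)
      · exact Finset.mem_insert_self _ _
    · rw [Finset.disjoint_left]
      intro a ha hae
      rw [Finset.mem_singleton] at hae
      subst hae
      rw [Finset.mem_insert, Finset.mem_erase] at ha
      rcases ha with rfl | ⟨h, _⟩
      exacts [heg rfl, h rfl]
    · have hA1 : insert e (p.1.erase g) \ {e} = p.1 \ {g} := by
        ext a
        simp only [Finset.mem_sdiff, Finset.mem_insert, Finset.mem_erase,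
          Finset.mem_singleton]
        constructor
        · rintro ⟨rfl | ⟨hag, hap⟩, hae⟩
          · exact absurd rfl hae
          · exact ⟨hap, hag⟩
        · rintro ⟨hap, hag⟩
          exact ⟨Or.inr ⟨hag, hap⟩, fun h => he1 (h ▸ hap)⟩
      have hA2 : insert g (p.2.erase e) \ {f, g} = p.2 \ {e, f} := by
        ext a
        simp only [Finset.mem_sdiff, Finset.mem_insert, Finset.mem_erase,
          Finset.mem_singleton, not_or]
        constructor
        · rintro ⟨rfl | ⟨hae, hap⟩, haf, hag⟩
          · exact absurd rfl hag
          · exact ⟨hap, hae, haf⟩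
        · rintro ⟨hap, hae, haf⟩
          exact ⟨Or.inr ⟨hae, hap⟩, haf, fun h => hg2 (h ▸ hap)⟩
      simp only [expo] at hμ ⊢
      rw [hA1, hA2]
      exact hμ
  · intro p hp q hq h
    obtain ⟨-, -, hgp1, hep1, -, hep2, -, hgp2, -⟩ :=
      mem_facts hef heg hfg (Finset.mem_filter.mp (Finset.mem_coe.mp hp)).1
    obtain ⟨-, -, hgq1, heq1, -, heq2, -, hgq2, -⟩ :=
      mem_facts hef heg hfg (Finset.mem_filter.mp (Finset.mem_coe.mp hq)).1
    obtain ⟨h1, h2⟩ := Prod.mk.injEq .. ▸ h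
    have hp1 : p.1 = q.1 := by
      have hep1' : e ∉ p.1.erase g := fun h => hep1 (Finset.mem_of_mem_erase h)
      have heq1' : e ∉ q.1.erase g := fun h => heq1 (Finset.mem_of_mem_erase h)
      have : p.1.erase g = q.1.erase g := by
        rw [← Finset.erase_insert hep1', h1, Finset.erase_insert heq1']
      rw [← Finset.insert_erase hgp1, this, Finset.insert_erase hgq1]
    have hp2 : p.2 = q.2 := by
      have hgp2' : g ∉ p.2.erase e := fun h => hgp2 (Finset.mem_of_mem_erase h)
      have hgq2' : g ∉ q.2.erase e := fun h => hgq2 (Finset.mem_of_mem_erase h)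
      have : p.2.erase e = q.2.erase e := by
        rw [← Finset.erase_insert hgp2', h2, Finset.erase_insert hgq2']
      rw [← Finset.insert_erase hep2, this, Finset.insert_erase heq2]
    exact Prod.ext hp1 hp2

lemma card_ineq (M : Matroid α) {e f g : α}
    (hef : e ≠ f) (heg : e ≠ g) (hfg : f ≠ g)
    (hdep : M.Dep {e, f, g}) (μ : α →₀ ℕ) :
    (pairSet M {g} {e, f} {e, f} {g} μ).card ≤
      (pairSet M {e} {f, g} {f, g} {e} μ).card +
      (pairSet M {f} {e, g} {e, g} {f} μ).card := by
  have h1 := filter_card_le (M := M) (μ := μ) hef heg hfg (condE M e g)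
    (fun p hp => (Finset.mem_filter.mp hp).2)
  have h2 := filter_card_le (M := M) (μ := μ) (Ne.symm hef) hfg heg
    (fun p => ¬ condE M e g p) ?_
  · rw [Finset.pair_comm f e] at h2
    calc (pairSet M {g} {e, f} {e, f} {g} μ).card
        = ((pairSet M {g} {e, f} {e, f} {g} μ).filter (condE M e g)).card +
          ((pairSet M {g} {e, f} {e, f} {g} μ).filter
            (fun p => ¬ condE M e g p)).card :=
          (Finset.card_filter_add_card_filter_not (condE M e g)).symm
      _ ≤ _ := add_le_add h1 h2
  · intro p hp
    obtain ⟨hpN, hnc⟩ := Finset.mem_filter.mp hp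
    rw [Finset.pair_comm f e] at hpN
    obtain ⟨hB1, hB2, hg1, he1, hf1, he2, hf2, hg2, -⟩ :=
      mem_facts hef heg hfg hpN
    have hex := exchange_key M hef heg hfg hdep hB1 hB2 hg1 he1 hf1 he2 hf2 hg2
    have hcoe1 : ∀ x : α, ((insert x (p.1.erase g) : Finset α) : Set α)
        = insert x ((p.1 : Set α) \ {g}) := by
      intro x; simp [Finset.coe_insert, Finset.coe_erase]
    have hcoe2 : ∀ x : α, ((insert g (p.2.erase x) : Finset α) : Set α)
        = insert g ((p.2 : Set α) \ {x}) := by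
      intro x; simp [Finset.coe_insert, Finset.coe_erase]
    rcases hex with ⟨hb1, hb2⟩ | ⟨hb1, hb2⟩
    · exact absurd (show condE M e g p from
        ⟨by rw [hcoe1]; exact hb1, by rw [hcoe2]; exact hb2⟩) hnc
    · exact ⟨by rw [hcoe1]; exact hb1, by rw [hcoe2]; exact hb2⟩

end CentralAux

open CentralAux in
/-- If `e, f, g` are distinct and `{e, f, g}` is dependent in `M`, then every
coefficient of the central term
`ΘM{e,f|g} = M_e^{fg}·M_{fg}^e + M_f^{eg}·M_{eg}^f − M_g^{ef}·M_{ef}^g − M_{efg}·M^{efg}`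
is nonnegative. -/
theorem central_term_coeff_nonneg {α : Type*} [Fintype α] [DecidableEq α]
    (M : Matroid α) (e f g : α) (hef : e ≠ f) (heg : e ≠ g) (hfg : f ≠ g)
    (hdep : M.Dep {e, f, g}) :
    ∀ μ : α →₀ ℕ,
      0 ≤ (M.minorPoly {e} {f, g} * M.minorPoly {f, g} {e}
        + M.minorPoly {f} {e, g} * M.minorPoly {e, g} {f}
        - M.minorPoly {g} {e, f} * M.minorPoly {e, f} {g}
        - M.minorPoly {e, f, g} ∅ * M.minorPoly ∅ {e, f, g}).coeff μ := by
  intro μ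
  have hzero : M.minorPoly {e, f, g} ∅ = 0 := by
    rw [Matroid.minorPoly]
    have hempty : (Finset.univ.filter
        (fun B : Finset α => M.IsBase (B : Set α) ∧ ({e, f, g} : Finset α) ⊆ B ∧
          Disjoint B (∅ : Finset α))) = ∅ := by
      rw [Finset.filter_eq_empty_iff]
      rintro B - ⟨hB, hsub, -⟩
      refine hdep.not_indep (hB.indep.subset ?_)
      have := Finset.coe_subset.mpr hsub
      simpa using this
    rw [hempty, Finset.sum_empty]
  rw [hzero, zero_mul, sub_zero]
  rw [coeff_sub, coeff_add, coeff_minor_mul, coeff_minor_mul, coeff_minor_mul]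
  have hcard := card_ineq M hef heg hfg hdep μ
  have : ((pairSet M {g} {e, f} {e, f} {g} μ).card : ℝ) ≤
      ((pairSet M {e} {f, g} {f, g} {e} μ).card : ℝ) +
      ((pairSet M {f} {e, g} {e, g} {f} μ).card : ℝ) := by
    exact_mod_cast hcard
  linarith
end

section
/- Let M be a matroid on a finite ground set E and let e, f, g ∈ E be distinct elements such that {e, f, g} is dependent in M. Then there exists an injective function from (M_g^{ef} × M_{ef}^g) ∪ (M_{efg} × M^{efg}) into (M_e^{fg} × M_{fg}^e) ∪ (M_f^{eg} × M_{eg}^f) such that whenever (B₁, B₂) ↦ (A₁, A₂), the multiset union of A₁ and A₂ equals the multiset union of B₁ and B₂ (equivalently, Π_{c∈A₁} y_c · Π_{c∈A₂} y_c = Π_{c∈B₁} y_c · Π_{c∈B₂} y_c as monomials). -/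
open MvPolynomial
open scoped Classical

/-- The set of bases of the minor `M_I^J` (contract `I`, delete `J`), regarded as the
family of sets `B ∖ I` where `B` is a basis of `M` with `I ⊆ B ⊆ E ∖ J`. -/
noncomputable def Matroid.minorBases {α : Type*} [Fintype α] [DecidableEq α]
    (M : Matroid α) (I J : Finset α) : Finset (Finset α) :=
  (Finset.univ.filter
      (fun B : Finset α => M.IsBase (B : Set α) ∧ I ⊆ B ∧ Disjoint B J)).image
    (fun B => B \ I)



namespace RayleighAux

variable {α : Type*} {M : Matroid α} {B B' : Set α} {e f g x y : α}

lemma aux_Q (hB' : M.IsBase B') (hxB' : x ∈ B') (hyB' : y ∈ B')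
    (hxy : x ≠ y) (hgx : g ∉ M.closure {x}) (hgxy : g ∈ M.closure {x, y}) :
    g ∉ M.closure (B' \ {y}) := by
  intro hcon
  have h1 : y ∈ M.closure (insert g {x}) := by
    refine Matroid.mem_closure_insert hgx ?_
    rwa [show (insert y {x} : Set α) = {x, y} by ext a; simp [or_comm]]
  have h3 : M.closure (insert g {x}) ⊆ M.closure (B' \ {y}) := by
    refine M.closure_subset_closure_of_subset_closure ?_
    rintro a ha
    simp only [Set.mem_insert_iff, Set.mem_singleton_iff] at ha
    rcases ha with rfl | rfl
    · exact hcon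
    · exact M.subset_closure _ (Set.diff_subset.trans hB'.subset_ground) ⟨hxB', by simp [hxy]⟩
  exact hB'.indep.notMem_closure_diff_of_mem hyB' (h3 h1)

lemma key (hB : M.IsBase B) (hB' : M.IsBase B') (hgB : g ∈ B) (heB : e ∉ B)
    (hfB : f ∉ B) (heB' : e ∈ B') (hfB' : f ∈ B') (hgB' : g ∉ B')
    (hef : e ≠ f) (heg : e ≠ g) (hfg : f ≠ g) (hdep : M.Dep {e, f, g}) :
    (M.IsBase (insert e (B \ {g})) ∧ M.IsBase (insert g (B' \ {e}))) ∨
    (M.IsBase (insert f (B \ {g})) ∧ M.IsBase (insert g (B' \ {f}))) := by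
  have heE : e ∈ M.E := hdep.subset_ground (by simp)
  have hfE : f ∈ M.E := hdep.subset_ground (by simp)
  have hgE : g ∈ M.E := hdep.subset_ground (by simp)
  have hefI : M.Indep {e, f} := hB'.indep.subset (by
    rintro a ha; simp only [Set.mem_insert_iff, Set.mem_singleton_iff] at ha
    rcases ha with rfl | rfl <;> assumption)
  have hgef : g ∈ M.closure {e, f} := by
    have hDep' : M.Dep (insert g {e, f}) := by
      rwa [show (insert g {e, f} : Set α) = {e, f, g} by ext a; simp; tauto]
    exact ((hefI.insert_dep_iff).mp hDep').1
  have hgcB : g ∉ M.closure (B \ {g}) := hB.indep.notMem_closure_diff_of_mem hgB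
  have hgloop : g ∉ M.closure ∅ :=
    fun h => hgcB (M.closure_subset_closure (Set.empty_subset _) h)
  -- building bases by exchange
  have mkB : ∀ x : α, x ∈ M.E → x ∉ B → x ≠ g → x ∉ M.closure (B \ {g}) →
      M.IsBase (insert x (B \ {g})) := by
    intro x hxE hxB hxg hx
    have hind : M.Indep (insert x B \ {g}) := by
      rw [← Set.insert_diff_singleton_comm hxg]
      exact ((hB.indep.subset Set.diff_subset).insert_indep_iff).mpr (Or.inl ⟨hxE, hx⟩)
    have := hB.exchange_isBase_of_indep' hgB hxB hind
    rwa [← Set.insert_diff_singleton_comm hxg] at this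
  have mkB' : ∀ x : α, x ∈ B' → g ≠ x → g ∉ M.closure (B' \ {x}) →
      M.IsBase (insert g (B' \ {x})) := by
    intro x hxB' hgx hx
    have hind : M.Indep (insert g B' \ {x}) := by
      rw [← Set.insert_diff_singleton_comm hgx]
      exact ((hB'.indep.subset Set.diff_subset).insert_indep_iff).mpr (Or.inl ⟨hgE, hx⟩)
    have := hB'.exchange_isBase_of_indep' hxB' hgB' hind
    rwa [← Set.insert_diff_singleton_comm hgx] at this
  -- if g is parallel to x then x ∉ closure (B \ {g})
  have mkP : ∀ x : α, g ∈ M.closure {x} → x ∉ M.closure (B \ {g}) := by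
    intro x hgx hcon
    exact hgcB ((M.closure_subset_closure_of_subset_closure (by simpa using hcon)) hgx)
  have notBoth : ¬ (e ∈ M.closure (B \ {g}) ∧ f ∈ M.closure (B \ {g})) := by
    rintro ⟨h1, h2⟩
    refine hgcB ((M.closure_subset_closure_of_subset_closure ?_) hgef)
    rintro a ha
    simp only [Set.mem_insert_iff, Set.mem_singleton_iff] at ha
    rcases ha with rfl | rfl <;> assumption
  by_cases hge : g ∈ M.closure {e}
  · -- e is parallel to g; use e
    have hgf : g ∉ M.closure {f} := by
      intro hgf
      have hecl : e ∈ M.closure (insert g (∅ : Set α)) :=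
        Matroid.mem_closure_insert (X := (∅ : Set α)) (e := g) (f := e) hgloop
          (by rw [show (insert e (∅ : Set α)) = {e} by ext a; simp]; exact hge)
      rw [show (insert g (∅ : Set α)) = {g} by ext a; simp] at hecl
      have hef' : e ∈ M.closure {f} :=
        (M.closure_subset_closure_of_subset_closure (by simpa using hgf)) hecl
      have h2 := hefI.notMem_closure_diff_of_mem (show e ∈ ({e, f} : Set α) by simp)
      rw [Set.pair_diff_left hef] at h2
      exact h2 hef'
    have hQe : g ∉ M.closure (B' \ {e}) :=
      aux_Q hB' hfB' heB' hef.symm hgf (by rwa [Set.pair_comm])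
    exact Or.inl ⟨mkB e heE heB heg (mkP e hge), mkB' e heB' heg.symm hQe⟩
  · have hQf : g ∉ M.closure (B' \ {f}) := aux_Q hB' heB' hfB' hef hge hgef
    by_cases hgf : g ∈ M.closure {f}
    · exact Or.inr ⟨mkB f hfE hfB hfg (mkP f hgf), mkB' f hfB' hfg.symm hQf⟩
    · have hQe : g ∉ M.closure (B' \ {e}) :=
        aux_Q hB' hfB' heB' hef.symm hgf (by rwa [Set.pair_comm])
      by_cases hPe : e ∈ M.closure (B \ {g})
      · have hPf : f ∉ M.closure (B \ {g}) := fun h => notBoth ⟨hPe, h⟩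
        exact Or.inr ⟨mkB f hfE hfB hfg hPf, mkB' f hfB' hfg.symm hQf⟩
      · exact Or.inl ⟨mkB e heE heB heg hPe, mkB' e heB' heg.symm hQe⟩

end RayleighAux

/-- If `e, f, g` are distinct and `{e, f, g}` is dependent in `M`, then there is an
injective map from `(M_g^{ef} × M_{ef}^g) ∪ (M_{efg} × M^{efg})` into
`(M_e^{fg} × M_{fg}^e) ∪ (M_f^{eg} × M_{eg}^f)` preserving the multiset union of the
two coordinates (equivalently, preserving the monomial `y^{B₁}·y^{B₂}`). -/
theorem exists_weight_preserving_injection {α : Type*} [Fintype α] [DecidableEq α]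
    (M : Matroid α) (e f g : α) (hef : e ≠ f) (heg : e ≠ g) (hfg : f ≠ g)
    (hdep : M.Dep {e, f, g}) :
    ∃ φ : Finset α × Finset α → Finset α × Finset α,
      Set.InjOn φ
        ↑((M.minorBases {g} {e, f} ×ˢ M.minorBases {e, f} {g}) ∪
          (M.minorBases {e, f, g} ∅ ×ˢ M.minorBases ∅ {e, f, g})) ∧
      ∀ p ∈ (M.minorBases {g} {e, f} ×ˢ M.minorBases {e, f} {g}) ∪
          (M.minorBases {e, f, g} ∅ ×ˢ M.minorBases ∅ {e, f, g}),
        φ p ∈ (M.minorBases {e} {f, g} ×ˢ M.minorBases {f, g} {e}) ∪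
            (M.minorBases {f} {e, g} ×ˢ M.minorBases {e, g} {f}) ∧
        (φ p).1.val + (φ p).2.val = p.1.val + p.2.val := by
  refine ⟨id, Set.injOn_id _, ?_⟩
  intro p hp
  rw [Finset.mem_union] at hp
  rcases hp with hp | hp
  swap
  · exfalso
    rw [Finset.mem_product] at hp
    obtain ⟨B, hBmem, -⟩ := Finset.mem_image.mp hp.1
    rw [Finset.mem_filter] at hBmem
    obtain ⟨-, hBbase, hsub, -⟩ := hBmem
    refine hdep.not_indep (hBbase.indep.subset ?_)
    intro a ha
    simp only [Set.mem_insert_iff, Set.mem_singleton_iff] at ha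
    have : a ∈ ({e, f, g} : Finset α) := by
      rcases ha with rfl | rfl | rfl <;> simp
    exact hsub this
  rw [Finset.mem_product] at hp
  obtain ⟨B, hBmem, hB1⟩ := Finset.mem_image.mp hp.1
  obtain ⟨B', hB'mem, hB2⟩ := Finset.mem_image.mp hp.2
  rw [Finset.mem_filter] at hBmem hB'mem
  obtain ⟨-, hBbase, hgsub, hBdisj⟩ := hBmem
  obtain ⟨-, hB'base, hefsub, hB'disj⟩ := hB'mem
  have hgB : g ∈ B := hgsub (by simp)
  have heB : e ∉ B := fun h => (Finset.disjoint_left.mp hBdisj h) (by simp)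
  have hfB : f ∉ B := fun h => (Finset.disjoint_left.mp hBdisj h) (by simp)
  have heB' : e ∈ B' := hefsub (by simp)
  have hfB' : f ∈ B' := hefsub (by simp)
  have hgB' : g ∉ B' := fun h => (Finset.disjoint_left.mp hB'disj h) (by simp)
  have hkey := RayleighAux.key (B := (B : Set α)) (B' := (B' : Set α)) hBbase hB'base
      (by exact_mod_cast hgB) (by exact_mod_cast heB) (by exact_mod_cast hfB)
      (by exact_mod_cast heB') (by exact_mod_cast hfB') (by exact_mod_cast hgB')
      hef heg hfg hdep
  refine ⟨?_, rfl⟩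
  rw [Finset.mem_union]
  rcases hkey with ⟨hA, hA'⟩ | ⟨hA, hA'⟩
  · left
    rw [Finset.mem_product]
    constructor
    · show p.1 ∈ _
      rw [← hB1]
      refine Finset.mem_image.mpr ⟨insert e (B \ {g}),
        Finset.mem_filter.mpr ⟨Finset.mem_univ _, ?_, ?_, ?_⟩, ?_⟩
      · rwa [show (((insert e (B \ {g}) : Finset α)) : Set α)
            = insert e ((B : Set α) \ {g}) by simp]
      · simp
      · rw [Finset.disjoint_left]
        intro a ha hc
        simp only [Finset.mem_insert, Finset.mem_sdiff, Finset.mem_singleton] at ha hc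
        rcases hc with rfl | rfl
        · rcases ha with rfl | ⟨h1, h2⟩
          · exact hef rfl
          · exact hfB h1
        · rcases ha with rfl | ⟨h1, h2⟩
          · exact heg rfl
          · exact h2 rfl
      · ext a
        by_cases h : a = e
        · subst h; simp [heB]
        · simp [h]
    · show p.2 ∈ _
      rw [← hB2]
      refine Finset.mem_image.mpr ⟨insert g (B' \ {e}),
        Finset.mem_filter.mpr ⟨Finset.mem_univ _, ?_, ?_, ?_⟩, ?_⟩
      · rwa [show (((insert g (B' \ {e}) : Finset α)) : Set α)
            = insert g ((B' : Set α) \ {e}) by simp]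
      · intro a ha
        simp only [Finset.mem_insert, Finset.mem_singleton] at ha
        simp only [Finset.mem_insert, Finset.mem_sdiff, Finset.mem_singleton]
        rcases ha with rfl | rfl
        · exact Or.inr ⟨hfB', hef.symm⟩
        · exact Or.inl rfl
      · rw [Finset.disjoint_left]
        intro a ha hc
        simp only [Finset.mem_singleton] at hc
        subst hc
        simp only [Finset.mem_insert, Finset.mem_sdiff, Finset.mem_singleton] at ha
        rcases ha with h | ⟨-, h⟩
        · exact heg h
        · exact h trivial
      · ext a
        by_cases h : a = g
        · subst h; simp [hgB']
        · simp only [Finset.mem_sdiff, Finset.mem_insert, Finset.mem_singleton]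
          constructor
          · rintro ⟨hg | ⟨h1, h2⟩, h3⟩
            · exact absurd hg h
            · push_neg at h3
              exact ⟨h1, by tauto⟩
          · rintro ⟨h1, h2⟩
            push_neg at h2
            exact ⟨Or.inr ⟨h1, h2.1⟩, by tauto⟩
  · right
    rw [Finset.mem_product]
    constructor
    · show p.1 ∈ _
      rw [← hB1]
      refine Finset.mem_image.mpr ⟨insert f (B \ {g}),
        Finset.mem_filter.mpr ⟨Finset.mem_univ _, ?_, ?_, ?_⟩, ?_⟩
      · rwa [show (((insert f (B \ {g}) : Finset α)) : Set α)
            = insert f ((B : Set α) \ {g}) by simp]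
      · simp
      · rw [Finset.disjoint_left]
        intro a ha hc
        simp only [Finset.mem_insert, Finset.mem_sdiff, Finset.mem_singleton] at ha hc
        rcases hc with rfl | rfl
        · rcases ha with rfl | ⟨h1, h2⟩
          · exact hef rfl.symm
          · exact heB h1
        · rcases ha with rfl | ⟨h1, h2⟩
          · exact hfg rfl
          · exact h2 rfl
      · ext a
        by_cases h : a = f
        · subst h; simp [hfB]
        · simp [h]
    · show p.2 ∈ _
      rw [← hB2]
      refine Finset.mem_image.mpr ⟨insert g (B' \ {f}),
        Finset.mem_filter.mpr ⟨Finset.mem_univ _, ?_, ?_, ?_⟩, ?_⟩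
      · rwa [show (((insert g (B' \ {f}) : Finset α)) : Set α)
            = insert g ((B' : Set α) \ {f}) by simp]
      · intro a ha
        simp only [Finset.mem_insert, Finset.mem_singleton] at ha
        simp only [Finset.mem_insert, Finset.mem_sdiff, Finset.mem_singleton]
        rcases ha with rfl | rfl
        · exact Or.inr ⟨heB', hef⟩
        · exact Or.inl rfl
      · rw [Finset.disjoint_left]
        intro a ha hc
        simp only [Finset.mem_singleton] at hc
        subst hc
        simp only [Finset.mem_insert, Finset.mem_sdiff, Finset.mem_singleton] at ha
        rcases ha with h | ⟨-, h⟩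
        · exact hfg h
        · exact h trivial
      · ext a
        by_cases h : a = g
        · subst h; simp [hgB']
        · simp only [Finset.mem_sdiff, Finset.mem_insert, Finset.mem_singleton]
          constructor
          · rintro ⟨hg | ⟨h1, h2⟩, h3⟩
            · exact absurd hg h
            · push_neg at h3
              exact ⟨h1, by tauto⟩
          · rintro ⟨h1, h2⟩
            push_neg at h2
            exact ⟨Or.inr ⟨h1, h2.2⟩, by tauto⟩
end

section
/- Let M be a loopless matroid on a finite ground set E, let a, a₁, …, a_k ∈ E be pairwise parallel elements of M (each pair forms a 2-element circuit), and let N := M∖{a₁,…,a_k} be the matroid obtained by deleting a₁, …, a_k. Define the substitution w by w_c := y_c for c ∈ E(N)∖{a} and w_a := y_a + y_{a₁} + ⋯ + y_{a_k}. Then the basis generating polynomials satisfy M(y) = N(w), and M is Rayleigh if and only if N is Rayleigh. -/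
open MvPolynomial
open scoped Classical

section Helpers
variable {α : Type*} [Fintype α] [DecidableEq α]

noncomputable def bSet (M : Matroid α) (I J : Finset α) : Finset (Finset α) :=
  Finset.univ.filter (fun B : Finset α => M.IsBase (B : Set α) ∧ I ⊆ B ∧ Disjoint B J)

lemma mem_bSet {M : Matroid α} {I J B : Finset α} :
    B ∈ bSet M I J ↔ M.IsBase (B : Set α) ∧ I ⊆ B ∧ Disjoint B J := by
  simp [bSet]


lemma minorPoly_eq (M : Matroid α) (I J : Finset α) :
    M.minorPoly I J = ∑ B ∈ bSet M I J, ∏ e ∈ B \ I, X e := rfl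

lemma eval_minorPoly (M : Matroid α) (I J : Finset α) (y : α → ℝ) :
    eval y (M.minorPoly I J) = ∑ B ∈ bSet M I J, ∏ e ∈ B \ I, y e := by
  rw [minorPoly_eq, map_sum]
  refine Finset.sum_congr rfl fun B _ => ?_
  rw [eval_prod]
  exact Finset.prod_congr rfl fun e _ => eval_X ..

lemma eval_minorPoly_nonneg (M : Matroid α) (I J : Finset α) {y : α → ℝ}
    (hy : ∀ c ∈ M.E, 0 ≤ y c) : 0 ≤ eval y (M.minorPoly I J) := by
  rw [eval_minorPoly]
  refine Finset.sum_nonneg fun B hB => Finset.prod_nonneg fun e he => ?_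
  rw [mem_bSet] at hB
  exact hy e (hB.1.subset_ground (by simpa using (Finset.mem_sdiff.1 he).1))

lemma eval_minorPoly_congr (M : Matroid α) (I J : Finset α) {y y' : α → ℝ}
    (h : ∀ c ∈ M.E, c ∉ I → c ∉ J → y c = y' c) :
    eval y (M.minorPoly I J) = eval y' (M.minorPoly I J) := by
  rw [eval_minorPoly, eval_minorPoly]
  refine Finset.sum_congr rfl fun B hB => Finset.prod_congr rfl fun e he => ?_
  rw [mem_bSet] at hB
  rw [Finset.mem_sdiff] at he
  exact h e (hB.1.subset_ground (by simpa using he.1)) he.2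
    (fun hc => (Finset.disjoint_left.1 hB.2.2) he.1 hc)

lemma minorPoly_congr_J (M : Matroid α) (I J J' : Finset α)
    (h : ∀ B : Finset α, M.IsBase (B : Set α) → (Disjoint B J ↔ Disjoint B J')) :
    M.minorPoly I J = M.minorPoly I J' := by
  rw [minorPoly_eq, minorPoly_eq]
  congr 1
  ext B
  rw [mem_bSet, mem_bSet]
  constructor
  · rintro ⟨h1, h2, h3⟩; exact ⟨h1, h2, (h B h1).1 h3⟩
  · rintro ⟨h1, h2, h3⟩; exact ⟨h1, h2, (h B h1).2 h3⟩

lemma eval_minorPoly_split (M : Matroid α) (I J : Finset α) (x : α)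
    (hxI : x ∉ I) (_hxJ : x ∉ J) (y : α → ℝ) :
    eval y (M.minorPoly I J) =
      y x * eval y (M.minorPoly (insert x I) J) + eval y (M.minorPoly I (insert x J)) := by
  rw [eval_minorPoly, eval_minorPoly, eval_minorPoly,
    ← Finset.sum_filter_add_sum_filter_not (bSet M I J) (fun B => x ∈ B)]
  congr 1
  · rw [Finset.mul_sum]
    refine Finset.sum_nbij' id id ?_ ?_ (fun _ _ => rfl) (fun _ _ => rfl) ?_
    · intro B hB
      rw [Finset.mem_filter, mem_bSet] at hB
      exact mem_bSet.2 ⟨hB.1.1, Finset.insert_subset hB.2 hB.1.2.1, hB.1.2.2⟩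
    · intro B hB
      rw [mem_bSet] at hB
      rw [Finset.mem_filter, mem_bSet]
      have hx : x ∈ B := hB.2.1 (Finset.mem_insert_self x I)
      exact ⟨⟨hB.1, (Finset.insert_subset_iff.1 hB.2.1).2, hB.2.2⟩, hx⟩
    · intro B hB
      rw [Finset.mem_filter, mem_bSet] at hB
      have hx : x ∈ B \ I := Finset.mem_sdiff.2 ⟨hB.2, hxI⟩
      have hset : (B \ I).erase x = B \ insert x I := by
        ext c
        simp only [Finset.mem_erase, Finset.mem_sdiff, Finset.mem_insert]
        tauto
      rw [← Finset.mul_prod_erase _ _ hx, hset]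
      rfl
  · refine Finset.sum_nbij' id id ?_ ?_ (fun _ _ => rfl) (fun _ _ => rfl) (fun _ _ => rfl)
    · intro B hB
      rw [Finset.mem_filter, mem_bSet] at hB
      refine mem_bSet.2 ⟨hB.1.1, hB.1.2.1, ?_⟩
      rw [Finset.disjoint_insert_right]
      exact ⟨hB.2, hB.1.2.2⟩
    · intro B hB
      rw [mem_bSet, Finset.disjoint_insert_right] at hB
      rw [Finset.mem_filter, mem_bSet]
      exact ⟨⟨hB.1, hB.2.1, hB.2.2.2⟩, hB.2.2.1⟩

lemma rayleighDiff_comm (M : Matroid α) (e f : α) :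
    M.rayleighDiff e f = M.rayleighDiff f e := by
  rw [Matroid.rayleighDiff, Matroid.rayleighDiff, Finset.pair_comm e f]
  ring

lemma eval_rayleighDiff_congr (M : Matroid α) (e f : α) {y y' : α → ℝ}
    (h : ∀ c ∈ M.E, y c = y' c) :
    eval y (M.rayleighDiff e f) = eval y' (M.rayleighDiff e f) := by
  simp only [Matroid.rayleighDiff, map_sub, map_mul]
  rw [eval_minorPoly_congr M {e} {f} (fun c hc _ _ => h c hc),
    eval_minorPoly_congr M {f} {e} (fun c hc _ _ => h c hc),
    eval_minorPoly_congr M {e, f} ∅ (fun c hc _ _ => h c hc),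
    eval_minorPoly_congr M ∅ {e, f} (fun c hc _ _ => h c hc)]

end Helpers

section Matroidal
variable {α : Type*}

lemma par_unique {M : Matroid α} {P : Set α}
    (hpar : ∀ x ∈ P, ∀ y ∈ P, x ≠ y → M.Dep {x, y}) {S : Set α} (hS : M.Indep S)
    {x y : α} (hx : x ∈ S) (hy : y ∈ S) (hxP : x ∈ P) (hyP : y ∈ P) : x = y := by
  by_contra hne
  exact ((hpar x hxP y hyP hne).not_indep) (hS.subset (by simp [Set.insert_subset_iff, hx, hy]))

lemma exchange_par {M : Matroid α} {B : Set α} {b b' : α} (hB : M.IsBase B)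
    (hb : b ∈ B) (hb' : b' ∉ B) (hb'E : b' ∈ M.E)
    (hbi : M.Indep {b'}) (hd : M.Dep {b, b'}) :
    M.IsBase (insert b' (B \ {b})) := by
  refine hB.exchange_isBase_of_indep hb' ?_
  have hBb : M.Indep (B \ {b}) := hB.indep.subset Set.diff_subset
  have hbc : b ∈ M.closure {b'} := by
    rw [hbi.mem_closure_iff]
    left
    rwa [show (insert b {b'} : Set α) = {b, b'} from rfl]
  have hnc : b' ∉ M.closure (B \ {b}) := by
    intro hc
    have h1 : M.closure {b'} ⊆ M.closure (B \ {b}) :=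
      M.closure_subset_closure_of_subset_closure (by simpa using hc)
    exact hB.indep.notMem_closure_sdiff_of_mem hb (h1 hbc)
  rw [hBb.insert_indep_iff_of_notMem (fun hc => hb'.elim hc.1)]
  exact ⟨hb'E, hnc⟩

lemma del_base_iff {M : Matroid α} {A : Set α} (hcl : M.E ⊆ M.closure (M.E \ A))
    {B : Set α} : (M.del A).IsBase B ↔ M.IsBase B ∧ Disjoint B A := by
  have hXE : M.E \ A ⊆ M.E := Set.diff_subset
  rw [Matroid.del, Matroid.isBase_restrict_iff]
  constructor
  · intro h
    have hsp : M.Spanning B := by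
      rw [Matroid.spanning_iff_closure_eq (h.indep.subset_ground)]
      rw [h.closure_eq_closure]
      exact (M.closure_subset_ground _).antisymm hcl
    exact ⟨h.indep.isBase_of_spanning hsp, (Set.subset_diff.1 h.subset).2⟩
  · rintro ⟨hB, hd⟩
    exact (Matroid.isBasis_ground_iff.2 hB).isBasis_subset
      (Set.subset_diff.2 ⟨hB.subset_ground, hd⟩) hXE

end Matroidal

section Core
variable {α : Type*} [Fintype α] [DecidableEq α]
variable {M : Matroid α} {a : α} {A : Finset α}
variable (hloopless : ∀ e ∈ M.E, M.Indep {e})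
variable (ha : a ∈ M.E) (haA : a ∉ A) (hA : ↑A ⊆ M.E)
variable (hpar : ∀ x ∈ insert a A, ∀ y ∈ insert a A, x ≠ y → M.Dep {x, y})

include hloopless ha haA hA hpar

lemma ground_cl : M.E ⊆ M.closure (M.E \ ↑A) := by
  intro x hx
  by_cases hxA : x ∈ A
  · have hia : M.Indep {a} := hloopless a ha
    have hxa : x ∈ M.closure {a} := by
      rw [hia.mem_closure_iff]
      left
      have : x ≠ a := fun h => haA (h ▸ hxA)
      have := hpar x (Finset.mem_insert_of_mem hxA) a (Finset.mem_insert_self a A) this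
      rwa [show (insert x {a} : Set α) = {x, a} from rfl]
    have haE : a ∈ M.E \ ↑A := ⟨ha, by simpa using haA⟩
    exact M.closure_subset_closure (by simpa using haE) hxa
  · exact M.subset_closure (M.E \ ↑A) Set.diff_subset ⟨hx, by simpa using hxA⟩

lemma Nbase_iff {B : Finset α} :
    (M.del ↑A).IsBase (B : Set α) ↔ M.IsBase (B : Set α) ∧ ∀ x ∈ B, x ∉ A := by
  rw [del_base_iff (ground_cl hloopless ha haA hA hpar)]
  constructor
  · rintro ⟨h1, h2⟩
    exact ⟨h1, fun x hx hxA => (Set.disjoint_left.1 h2) (by simpa using hx) (by simpa using hxA)⟩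
  · rintro ⟨h1, h2⟩
    refine ⟨h1, Set.disjoint_left.2 fun x hx hxA => ?_⟩
    exact h2 x (by simpa using hx) (by simpa using hxA)

lemma base_par_unique {B : Finset α} (hB : M.IsBase (B : Set α)) {x y : α}
    (hx : x ∈ B) (hy : y ∈ B) (hxP : x ∈ insert a A) (hyP : y ∈ insert a A) : x = y := by
  refine par_unique (P := ((insert a A : Finset α) : Set α)) ?_ hB.indep
    (by simpa using hx) (by simpa using hy) (by simpa using hxP) (by simpa using hyP)
  intro u hu v hv huv
  exact hpar u (by simpa using hu) v (by simpa using hv) huv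

/-- The key bijection: bases of `M` through a fixed parallel element `b`
correspond to bases of the deletion through `a`. -/
lemma swap_sum (b : α) (hb : b ∈ insert a A) (I J : Finset α)
    (haI : a ∉ I) (hbI : b ∉ I) (haJ : a ∉ J) (hbJ : b ∉ J) (y : α → ℝ) :
    ∑ B ∈ (bSet M I J).filter (fun B => b ∈ B), ∏ e ∈ B \ I, y e
      = y b * ∑ B ∈ bSet (M.del ↑A) (insert a I) J, ∏ e ∈ B \ insert a I, y e := by
  have hNiff := fun {B : Finset α} => Nbase_iff hloopless ha haA hA hpar (B := B)
  have huniq := fun {B : Finset α} hB {x y} hx hy hxP hyP =>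
    base_par_unique hloopless ha haA hA hpar (B := B) hB (x := x) (y := y) hx hy hxP hyP
  rw [Finset.mul_sum]
  refine Finset.sum_nbij' (fun B => insert a (B.erase b)) (fun B => insert b (B.erase a))
    ?_ ?_ ?_ ?_ ?_
  · -- forward membership
    intro B hB
    rw [Finset.mem_filter, mem_bSet] at hB
    obtain ⟨⟨hBb, hIB, hBJ⟩, hbB⟩ := hB
    have haB : a ∈ B → a = b := fun h => huniq hBb h hbB (Finset.mem_insert_self a A) hb
    rw [mem_bSet]
    refine ⟨?_, ?_, ?_⟩
    · rw [hNiff]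
      constructor
      · by_cases hba : b = a
        · subst hba
          rwa [Finset.insert_erase hbB]
        · have haB' : a ∉ B := fun h => hba ((haB h).symm)
          have hbase : M.IsBase (insert a ((B : Set α) \ {b})) := by
            refine exchange_par hBb (by simpa using hbB) (by simpa using haB') ha
              (hloopless a ha) ?_
            exact hpar b hb a (Finset.mem_insert_self a A) hba
          have : ((insert a (B.erase b) : Finset α) : Set α) = insert a ((B : Set α) \ {b}) := by
            simp
          rwa [this]
      · intro x hx hxA
        rcases Finset.mem_insert.1 hx with rfl | hx'
        · exact haA hxA
        · have hxb : x = b := huniq hBb (Finset.mem_of_mem_erase hx') hbB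
            (Finset.mem_insert_of_mem hxA) hb
          exact (Finset.ne_of_mem_erase hx') hxb
    · refine Finset.insert_subset_iff.2 ⟨Finset.mem_insert_self a _, fun x hx => ?_⟩
      exact Finset.mem_insert_of_mem (Finset.mem_erase.2 ⟨fun h => hbI (h ▸ hx), hIB hx⟩)
    · rw [Finset.disjoint_insert_left]
      exact ⟨haJ, Finset.disjoint_of_subset_left (Finset.erase_subset b B) hBJ⟩
  · -- backward membership
    intro B hB
    rw [mem_bSet, hNiff] at hB
    obtain ⟨⟨hBb, hBA⟩, hIB, hBJ⟩ := hB
    have haB : a ∈ B := hIB (Finset.mem_insert_self a I)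
    rw [Finset.mem_filter, mem_bSet]
    refine ⟨⟨?_, ?_, ?_⟩, Finset.mem_insert_self b _⟩
    · by_cases hba : b = a
      · subst hba
        rwa [Finset.insert_erase haB]
      · have hbA : b ∈ A := by
          rcases Finset.mem_insert.1 hb with h | h
          · exact absurd h hba
          · exact h
        have hbB : b ∉ B := fun h => hBA b h hbA
        have hbase : M.IsBase (insert b ((B : Set α) \ {a})) := by
          refine exchange_par hBb (by simpa using haB) (by simpa using hbB) (hA hbA)
            (hloopless b (hA hbA)) ?_
          exact hpar a (Finset.mem_insert_self a A) b hb (fun h => hba h.symm)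
        have : ((insert b (B.erase a) : Finset α) : Set α) = insert b ((B : Set α) \ {a}) := by
          simp
        rwa [this]
    · intro x hx
      refine Finset.mem_insert_of_mem (Finset.mem_erase.2 ⟨fun h => haI (h ▸ hx), ?_⟩)
      exact hIB (Finset.mem_insert_of_mem hx)
    · rw [Finset.disjoint_insert_left]
      exact ⟨hbJ, Finset.disjoint_of_subset_left (Finset.erase_subset a B) hBJ⟩
  · -- left inverse
    intro B hB
    rw [Finset.mem_filter, mem_bSet] at hB
    obtain ⟨⟨hBb, hIB, hBJ⟩, hbB⟩ := hB
    have haB : a ∈ B → a = b := fun h => huniq hBb h hbB (Finset.mem_insert_self a A) hb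
    by_cases hba : b = a
    · subst hba
      rw [Finset.insert_erase hbB, Finset.insert_erase hbB]
    · have haB' : a ∉ B := fun h => hba ((haB h).symm)
      rw [Finset.erase_insert (fun h => haB' (Finset.mem_of_mem_erase h)),
        Finset.insert_erase hbB]
  · -- right inverse
    intro B hB
    rw [mem_bSet, hNiff] at hB
    obtain ⟨⟨hBb, hBA⟩, hIB, hBJ⟩ := hB
    have haB : a ∈ B := hIB (Finset.mem_insert_self a I)
    by_cases hba : b = a
    · subst hba
      rw [Finset.insert_erase haB, Finset.insert_erase haB]
    · have hbA : b ∈ A := by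
        rcases Finset.mem_insert.1 hb with h | h
        · exact absurd h hba
        · exact h
      have hbB : b ∉ B := fun h => hBA b h hbA
      rw [Finset.erase_insert (fun h => hbB (Finset.mem_of_mem_erase h)),
        Finset.insert_erase haB]
  · -- products
    intro B hB
    rw [Finset.mem_filter, mem_bSet] at hB
    obtain ⟨⟨hBb, hIB, hBJ⟩, hbB⟩ := hB
    have haB : a ∈ B → a = b := fun h => huniq hBb h hbB (Finset.mem_insert_self a A) hb
    have hx : b ∈ B \ I := Finset.mem_sdiff.2 ⟨hbB, hbI⟩
    have hset : insert a (B.erase b) \ insert a I = (B \ I).erase b := by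
      ext c
      simp only [Finset.mem_sdiff, Finset.mem_insert, Finset.mem_erase, not_or]
      constructor
      · rintro ⟨h1, h2, h3⟩
        rcases h1 with rfl | ⟨hcb, hcB⟩
        · exact absurd rfl h2
        · exact ⟨hcb, hcB, h3⟩
      · rintro ⟨hcb, hcB, hcI⟩
        have hca : c ≠ a := fun h => hcb (h ▸ haB (h ▸ hcB))
        exact ⟨Or.inr ⟨hcb, hcB⟩, hca, hcI⟩
    rw [hset]
    exact (Finset.mul_prod_erase _ _ hx).symm

lemma Bstar (I J : Finset α) (hIP : ∀ x ∈ I, x ∉ insert a A) (haJ : a ∉ J) (y : α → ℝ) :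
    eval y (M.minorPoly I J)
      = (∑ b ∈ (insert a A) \ J, y b) * eval y ((M.del ↑A).minorPoly (insert a I) J)
        + eval y ((M.del ↑A).minorPoly I (insert a J)) := by
  have hNiff := fun {B : Finset α} => Nbase_iff hloopless ha haA hA hpar (B := B)
  have huniq := fun {B : Finset α} hB {x y} hx hy hxP hyP =>
    base_par_unique hloopless ha haA hA hpar (B := B) hB (x := x) (y := y) hx hy hxP hyP
  have haI : a ∉ I := fun h => hIP a h (Finset.mem_insert_self a A)
  rw [eval_minorPoly, eval_minorPoly, eval_minorPoly,
    ← Finset.sum_filter_add_sum_filter_not (bSet M I J)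
      (fun B => Disjoint B (insert a A))]
  rw [add_comm]
  congr 1
  · -- the part meeting the parallel class
    have h2 : (bSet M I J).filter (fun B => ¬ Disjoint B (insert a A))
        = ((insert a A) \ J).biUnion (fun b => (bSet M I J).filter (fun B => b ∈ B)) := by
      ext B
      simp only [Finset.mem_filter, Finset.mem_biUnion, Finset.mem_sdiff]
      constructor
      · rintro ⟨hB, hnd⟩
        rw [Finset.not_disjoint_iff] at hnd
        obtain ⟨b, hbB, hbP⟩ := hnd
        exact ⟨b, ⟨hbP, fun hbJ => (Finset.disjoint_left.1 (mem_bSet.1 hB).2.2) hbB hbJ⟩,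
          hB, hbB⟩
      · rintro ⟨b, ⟨hbP, _⟩, hB, hbB⟩
        exact ⟨hB, Finset.not_disjoint_iff.2 ⟨b, hbB, hbP⟩⟩
    have hdisj : (↑((insert a A : Finset α) \ J : Finset α) : Set α).PairwiseDisjoint
        (fun b => (bSet M I J).filter (fun B => b ∈ B)) := by
      intro b hb b' hb' hbb'
      simp only [Finset.coe_sdiff, Set.mem_diff, Finset.mem_coe, Finset.mem_sdiff] at hb hb'
      refine Finset.disjoint_left.2 fun B hB hB' => ?_
      rw [Finset.mem_filter, mem_bSet] at hB hB'
      exact hbb' (huniq hB.1.1 hB.2 hB'.2 hb.1 hb'.1)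
    rw [h2, Finset.sum_biUnion hdisj, Finset.sum_mul]
    refine Finset.sum_congr rfl fun b hb => ?_
    rw [Finset.mem_sdiff] at hb
    exact swap_sum hloopless ha haA hA hpar b hb.1 I J haI (fun h => hIP b h hb.1) haJ hb.2 y
  · -- the part avoiding the parallel class
    have h1 : (bSet M I J).filter (fun B => Disjoint B (insert a A))
        = bSet (M.del ↑A) I (insert a J) := by
      ext B
      rw [Finset.mem_filter, mem_bSet, mem_bSet, hNiff, Finset.disjoint_insert_right,
        Finset.disjoint_insert_right]
      rw [show (Disjoint B A ↔ ∀ x ∈ B, x ∉ A) from Finset.disjoint_left]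
      tauto
    rw [h1]

lemma Bdstar (I J : Finset α) (hIP : ∀ x ∈ I, x ∉ insert a A)
    (hAJ : ∀ b ∈ A, b ∉ J) (y : α → ℝ) :
    eval y (M.minorPoly I J)
      = (∑ b ∈ A, y b) * eval y ((M.del ↑A).minorPoly (insert a I) (J.erase a))
        + eval y ((M.del ↑A).minorPoly I J) := by
  have hNiff := fun {B : Finset α} => Nbase_iff hloopless ha haA hA hpar (B := B)
  have huniq := fun {B : Finset α} hB {x y} hx hy hxP hyP =>
    base_par_unique hloopless ha haA hA hpar (B := B) hB (x := x) (y := y) hx hy hxP hyP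
  have haI : a ∉ I := fun h => hIP a h (Finset.mem_insert_self a A)
  rw [eval_minorPoly, eval_minorPoly, eval_minorPoly,
    ← Finset.sum_filter_add_sum_filter_not (bSet M I J) (fun B => Disjoint B A)]
  rw [add_comm]
  congr 1
  · have h2 : (bSet M I J).filter (fun B => ¬ Disjoint B A)
        = A.biUnion (fun b => (bSet M I J).filter (fun B => b ∈ B)) := by
      ext B
      simp only [Finset.mem_filter, Finset.mem_biUnion]
      constructor
      · rintro ⟨hB, hnd⟩
        rw [Finset.not_disjoint_iff] at hnd
        obtain ⟨b, hbB, hbA⟩ := hnd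
        exact ⟨b, hbA, hB, hbB⟩
      · rintro ⟨b, hbA, hB, hbB⟩
        exact ⟨hB, Finset.not_disjoint_iff.2 ⟨b, hbB, hbA⟩⟩
    have hdisj : (↑(A : Finset α) : Set α).PairwiseDisjoint
        (fun b => (bSet M I J).filter (fun B => b ∈ B)) := by
      intro b hb b' hb' hbb'
      simp only [Finset.mem_coe] at hb hb'
      refine Finset.disjoint_left.2 fun B hB hB' => ?_
      rw [Finset.mem_filter, mem_bSet] at hB hB'
      exact hbb' (huniq hB.1.1 hB.2 hB'.2 (Finset.mem_insert_of_mem hb)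
        (Finset.mem_insert_of_mem hb'))
    rw [h2, Finset.sum_biUnion hdisj, Finset.sum_mul]
    refine Finset.sum_congr rfl fun b hb => ?_
    have hbP : b ∈ insert a A := Finset.mem_insert_of_mem hb
    have hba : b ≠ a := fun h => haA (h ▸ hb)
    have h3 : (bSet M I J).filter (fun B => b ∈ B)
        = (bSet M I (J.erase a)).filter (fun B => b ∈ B) := by
      ext B
      rw [Finset.mem_filter, Finset.mem_filter, mem_bSet, mem_bSet]
      constructor
      · rintro ⟨⟨h1', h2', h3'⟩, h4'⟩
        exact ⟨⟨h1', h2', Finset.disjoint_of_subset_right (Finset.erase_subset a J) h3'⟩, h4'⟩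
      · rintro ⟨⟨h1', h2', h3'⟩, h4'⟩
        have haB : a ∉ B := fun h =>
          hba (huniq h1' h4' h hbP (Finset.mem_insert_self a A))
        refine ⟨⟨h1', h2', Finset.disjoint_left.2 fun x hx hxJ => ?_⟩, h4'⟩
        rcases eq_or_ne x a with rfl | hxa
        · exact haB hx
        · exact (Finset.disjoint_left.1 h3') hx (Finset.mem_erase.2 ⟨hxa, hxJ⟩)
    rw [h3]
    exact swap_sum hloopless ha haA hA hpar b hbP I (J.erase a) haI (fun h => hIP b h hbP)
      (Finset.notMem_erase a J) (fun h => hAJ b hb (Finset.mem_of_mem_erase h)) y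
  · have h1 : (bSet M I J).filter (fun B => Disjoint B A) = bSet (M.del ↑A) I J := by
      ext B
      rw [Finset.mem_filter, mem_bSet, mem_bSet, hNiff]
      rw [show (Disjoint B A ↔ ∀ x ∈ B, x ∉ A) from Finset.disjoint_left]
      tauto
    rw [h1]

lemma Bcontract (I J : Finset α) (f : α) (hf : f ∈ insert a A) (hfI : f ∈ I)
    (haI : a ∉ I.erase f) (haJ : a ∉ J) (hfJ : f ∉ J) (y : α → ℝ) :
    eval y (M.minorPoly I J)
      = eval y ((M.del ↑A).minorPoly (insert a (I.erase f)) J) := by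
  have hNiff := fun {B : Finset α} => Nbase_iff hloopless ha haA hA hpar (B := B)
  have huniq := fun {B : Finset α} hB {x y} hx hy hxP hyP =>
    base_par_unique hloopless ha haA hA hpar (B := B) hB (x := x) (y := y) hx hy hxP hyP
  rw [eval_minorPoly, eval_minorPoly]
  refine Finset.sum_nbij' (fun B => insert a (B.erase f)) (fun B => insert f (B.erase a))
    ?_ ?_ ?_ ?_ ?_
  · -- forward membership
    intro B hB
    rw [mem_bSet] at hB
    obtain ⟨hBb, hIB, hBJ⟩ := hB
    have hfB : f ∈ B := hIB hfI
    have haB : a ∈ B → a = f := fun h => huniq hBb h hfB (Finset.mem_insert_self a A) hf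
    rw [mem_bSet]
    refine ⟨?_, ?_, ?_⟩
    · rw [hNiff]
      constructor
      · by_cases hfa : f = a
        · subst hfa
          rwa [Finset.insert_erase hfB]
        · have haB' : a ∉ B := fun h => hfa ((haB h).symm)
          have hbase : M.IsBase (insert a ((B : Set α) \ {f})) := by
            refine exchange_par hBb (by simpa using hfB) (by simpa using haB') ha
              (hloopless a ha) ?_
            exact hpar f hf a (Finset.mem_insert_self a A) hfa
          have hco : ((insert a (B.erase f) : Finset α) : Set α)
              = insert a ((B : Set α) \ {f}) := by simp
          rwa [hco]
      · intro x hx hxA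
        rcases Finset.mem_insert.1 hx with rfl | hx'
        · exact haA hxA
        · exact (Finset.ne_of_mem_erase hx')
            (huniq hBb (Finset.mem_of_mem_erase hx') hfB (Finset.mem_insert_of_mem hxA) hf)
    · refine Finset.insert_subset_iff.2 ⟨Finset.mem_insert_self a _, fun x hx => ?_⟩
      exact Finset.mem_insert_of_mem (Finset.mem_erase.2
        ⟨Finset.ne_of_mem_erase hx, hIB (Finset.mem_of_mem_erase hx)⟩)
    · rw [Finset.disjoint_insert_left]
      exact ⟨haJ, Finset.disjoint_of_subset_left (Finset.erase_subset f B) hBJ⟩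
  · -- backward membership
    intro B hB
    rw [mem_bSet, hNiff] at hB
    obtain ⟨⟨hBb, hBA⟩, hIB, hBJ⟩ := hB
    have haB : a ∈ B := hIB (Finset.mem_insert_self a _)
    rw [mem_bSet]
    refine ⟨?_, ?_, ?_⟩
    · by_cases hfa : f = a
      · subst hfa
        rwa [Finset.insert_erase haB]
      · have hfA : f ∈ A := by
          rcases Finset.mem_insert.1 hf with h | h
          · exact absurd h hfa
          · exact h
        have hfB : f ∉ B := fun h => hBA f h hfA
        have hbase : M.IsBase (insert f ((B : Set α) \ {a})) := by
          refine exchange_par hBb (by simpa using haB) (by simpa using hfB) (hA hfA)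
            (hloopless f (hA hfA)) ?_
          exact hpar a (Finset.mem_insert_self a A) f hf (fun h => hfa h.symm)
        have hco : ((insert f (B.erase a) : Finset α) : Set α)
            = insert f ((B : Set α) \ {a}) := by simp
        rwa [hco]
    · intro x hx
      rcases eq_or_ne x f with rfl | hxf
      · exact Finset.mem_insert_self x _
      · have hx' : x ∈ I.erase f := Finset.mem_erase.2 ⟨hxf, hx⟩
        have hxa : x ≠ a := fun h => haI (h ▸ hx')
        exact Finset.mem_insert_of_mem (Finset.mem_erase.2
          ⟨hxa, hIB (Finset.mem_insert_of_mem hx')⟩)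
    · rw [Finset.disjoint_insert_left]
      exact ⟨hfJ, Finset.disjoint_of_subset_left (Finset.erase_subset a B) hBJ⟩
  · -- left inverse
    intro B hB
    rw [mem_bSet] at hB
    obtain ⟨hBb, hIB, hBJ⟩ := hB
    have hfB : f ∈ B := hIB hfI
    have haB : a ∈ B → a = f := fun h => huniq hBb h hfB (Finset.mem_insert_self a A) hf
    by_cases hfa : f = a
    · subst hfa
      rw [Finset.insert_erase hfB, Finset.insert_erase hfB]
    · have haB' : a ∉ B := fun h => hfa ((haB h).symm)
      rw [Finset.erase_insert (fun h => haB' (Finset.mem_of_mem_erase h)),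
        Finset.insert_erase hfB]
  · -- right inverse
    intro B hB
    rw [mem_bSet, hNiff] at hB
    obtain ⟨⟨hBb, hBA⟩, hIB, hBJ⟩ := hB
    have haB : a ∈ B := hIB (Finset.mem_insert_self a _)
    by_cases hfa : f = a
    · subst hfa
      rw [Finset.insert_erase haB, Finset.insert_erase haB]
    · have hfA : f ∈ A := by
        rcases Finset.mem_insert.1 hf with h | h
        · exact absurd h hfa
        · exact h
      have hfB : f ∉ B := fun h => hBA f h hfA
      rw [Finset.erase_insert (fun h => hfB (Finset.mem_of_mem_erase h)),
        Finset.insert_erase haB]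
  · -- products
    intro B hB
    rw [mem_bSet] at hB
    obtain ⟨hBb, hIB, hBJ⟩ := hB
    have hfB : f ∈ B := hIB hfI
    have haB : a ∈ B → a = f := fun h => huniq hBb h hfB (Finset.mem_insert_self a A) hf
    have hset : B \ I = insert a (B.erase f) \ insert a (I.erase f) := by
      ext c
      simp only [Finset.mem_sdiff, Finset.mem_insert, Finset.mem_erase, not_or]
      constructor
      · rintro ⟨hcB, hcI⟩
        have hcf : c ≠ f := fun h => hcI (h ▸ hfI)
        have hca : c ≠ a := fun h => hcf (h ▸ haB (h ▸ hcB))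
        exact ⟨Or.inr ⟨hcf, hcB⟩, hca, fun hc => hcI hc.2⟩
      · rintro ⟨h1, h2, h3⟩
        rcases h1 with rfl | ⟨hcf, hcB⟩
        · exact absurd rfl h2
        · exact ⟨hcB, fun hcI => h3 ⟨hcf, hcI⟩⟩
    rw [hset]

lemma Beval (I J : Finset α) (hIP : ∀ x ∈ I, x ∉ insert a A)
    (hJP : ∀ x ∈ J, x ∉ insert a A) (y : α → ℝ) :
    eval y (M.minorPoly I J)
      = eval (fun c => if c = a then y a + ∑ b ∈ A, y b else y c)
          ((M.del ↑A).minorPoly I J) := by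
  set w : α → ℝ := fun c => if c = a then y a + ∑ b ∈ A, y b else y c with hw
  have haI : a ∉ I := fun h => hIP a h (Finset.mem_insert_self a A)
  have haJ : a ∉ J := fun h => hJP a h (Finset.mem_insert_self a A)
  have hNE : (M.del ↑A).E = M.E \ ↑A := rfl
  rw [eval_minorPoly_split (M.del ↑A) I J a haI haJ w]
  have hc1 : eval w ((M.del ↑A).minorPoly (insert a I) J)
      = eval y ((M.del ↑A).minorPoly (insert a I) J) := by
    refine eval_minorPoly_congr _ _ _ fun c hc hcI _ => ?_
    have hca : c ≠ a := fun h => hcI (h ▸ Finset.mem_insert_self a I)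
    simp [hw, hca]
  have hc2 : eval w ((M.del ↑A).minorPoly I (insert a J))
      = eval y ((M.del ↑A).minorPoly I (insert a J)) := by
    refine eval_minorPoly_congr _ _ _ fun c hc _ hcJ => ?_
    have hca : c ≠ a := fun h => hcJ (h ▸ Finset.mem_insert_self a J)
    simp [hw, hca]
  have hwa : w a = y a + ∑ b ∈ A, y b := by simp [hw]
  rw [hc1, hc2, hwa]
  rw [Bstar hloopless ha haA hA hpar I J hIP haJ y]
  have hPJ : (insert a A) \ J = insert a A := by
    rw [Finset.sdiff_eq_self_iff_disjoint]
    exact Finset.disjoint_left.2 fun x hx hxJ => hJP x hxJ hx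
  rw [hPJ, Finset.sum_insert haA]

lemma caseTwo (e f : α) (he : e ∈ M.E) (heP : e ∉ insert a A) (hf : f ∈ insert a A)
    (y : α → ℝ) :
    eval y (M.rayleighDiff e f) = eval y ((M.del ↑A).rayleighDiff e a) := by
  have hNiff := fun {B : Finset α} => Nbase_iff hloopless ha haA hA hpar (B := B)
  have hea : e ≠ a := fun h => heP (by rw [h]; exact Finset.mem_insert_self a A)
  have heA : e ∉ A := fun h => heP (Finset.mem_insert_of_mem h)
  have hef : e ≠ f := fun h => heP (h ▸ hf)
  have hfe : f ≠ e := fun h => hef h.symm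
  have hpair1 : ({a, e} : Finset α) = {e, a} := Finset.pair_comm a e
  have herase : ({e, f} : Finset α).erase f = {e} := by
    ext x
    simp only [Finset.mem_erase, Finset.mem_insert, Finset.mem_singleton]
    constructor
    · rintro ⟨hxf, rfl | rfl⟩
      · rfl
      · exact absurd rfl hxf
    · rintro rfl
      exact ⟨hef, Or.inl rfl⟩
  -- h1 : M_f^e = N_a^e
  have h1 : eval y (M.minorPoly {f} {e}) = eval y ((M.del ↑A).minorPoly {a} {e}) := by
    have := Bcontract hloopless ha haA hA hpar {f} {e} f hf (Finset.mem_singleton_self f)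
      (by simp) (by simp [Ne.symm hea]) (by simp [hfe]) y
    rwa [Finset.erase_singleton, show (insert a (∅ : Finset α)) = {a} from rfl] at this
  -- h2 : M_{ef} = N_{ea}
  have h2 : eval y (M.minorPoly {e, f} ∅) = eval y ((M.del ↑A).minorPoly {e, a} ∅) := by
    have := Bcontract hloopless ha haA hA hpar {e, f} ∅ f hf
      (Finset.mem_insert_of_mem (Finset.mem_singleton_self f))
      (by rw [herase]; simp [Ne.symm hea]) (by simp) (by simp) y
    rwa [herase, show (insert a {e} : Finset α) = {a, e} from rfl, hpair1] at this
  -- h3 : M_e^f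
  have h3 : eval y (M.minorPoly {e} {f})
      = (∑ b ∈ (insert a A).erase f, y b) * eval y ((M.del ↑A).minorPoly {e, a} ∅)
        + eval y ((M.del ↑A).minorPoly {e} {a}) := by
    by_cases hfa : f = a
    · subst hfa
      have := Bdstar hloopless ha haA hA hpar {e} {f}
        (by intro x hx; rw [Finset.mem_singleton] at hx; subst hx; exact heP)
        (fun b hb => by simp [show b ≠ f from fun h => haA (h ▸ hb)]) y
      rw [Finset.erase_insert haA]
      rwa [Finset.erase_singleton,
        show (insert f {e} : Finset α) = {f, e} from rfl, Finset.pair_comm f e] at this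
    · have hfA : f ∈ A := by
        rcases Finset.mem_insert.1 hf with h | h
        · exact absurd h hfa
        · exact h
      have hfree : ∀ B : Finset α, (M.del ↑A).IsBase (B : Set α) → f ∉ B :=
        fun B hB h => (hNiff.1 hB).2 f h hfA
      have := Bstar hloopless ha haA hA hpar {e} {f}
        (by intro x hx; rw [Finset.mem_singleton] at hx; subst hx; exact heP)
        (by simp only [Finset.mem_singleton]; exact fun h => hfa h.symm) y
      rw [this, ← Finset.erase_eq]
      congr 1
      · congr 1
        rw [minorPoly_congr_J (M.del ↑A) _ {f} ∅
            (fun B hB => by simp [Finset.disjoint_singleton_right, hfree B hB]),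
          show (insert a {e} : Finset α) = {a, e} from rfl, hpair1]
      · rw [minorPoly_congr_J (M.del ↑A) _ (insert a {f}) {a}
            (fun B hB => by
              simp [Finset.disjoint_insert_right, Finset.disjoint_singleton_right,
                hfree B hB])]
  -- h4 : M^{ef}
  have h4 : eval y (M.minorPoly ∅ {e, f})
      = (∑ b ∈ (insert a A).erase f, y b) * eval y ((M.del ↑A).minorPoly {a} {e})
        + eval y ((M.del ↑A).minorPoly ∅ {e, a}) := by
    by_cases hfa : f = a
    · subst hfa
      have herase2 : ({e, f} : Finset α).erase f = {e} := herase
      have := Bdstar hloopless ha haA hA hpar ∅ {e, f} (by simp)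
        (fun b hb => by
          simp only [Finset.mem_insert, Finset.mem_singleton, not_or]
          exact ⟨fun h => heA (h ▸ hb), fun h => haA (h ▸ hb)⟩) y
      rw [Finset.erase_insert haA]
      rwa [herase2, show (insert f (∅ : Finset α)) = {f} from rfl] at this
    · have hfA : f ∈ A := by
        rcases Finset.mem_insert.1 hf with h | h
        · exact absurd h hfa
        · exact h
      have hfree : ∀ B : Finset α, (M.del ↑A).IsBase (B : Set α) → f ∉ B :=
        fun B hB h => (hNiff.1 hB).2 f h hfA
      have := Bstar hloopless ha haA hA hpar ∅ {e, f} (by simp)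
        (by
          simp only [Finset.mem_insert, Finset.mem_singleton, not_or]
          exact ⟨Ne.symm hea, fun h => hfa h.symm⟩) y
      rw [this]
      have hPef : (insert a A) \ {e, f} = (insert a A).erase f := by
        ext x
        simp only [Finset.mem_sdiff, Finset.mem_insert, Finset.mem_singleton,
          Finset.mem_erase, not_or]
        constructor
        · rintro ⟨h1', _, h3'⟩
          exact ⟨h3', h1'⟩
        · rintro ⟨hxf, hxP⟩
          refine ⟨hxP, fun h => ?_, hxf⟩
          subst h
          exact heP (by simpa using hxP)
      rw [hPef]
      congr 1
      · congr 1
        rw [minorPoly_congr_J (M.del ↑A) _ {e, f} {e}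
            (fun B hB => by
              simp [Finset.disjoint_insert_right, Finset.disjoint_singleton_right,
                hfree B hB]),
          show (insert a (∅ : Finset α)) = {a} from rfl]
      · rw [minorPoly_congr_J (M.del ↑A) _ (insert a {e, f}) {e, a}
            (fun B hB => by
              simp only [Finset.disjoint_insert_right, Finset.disjoint_singleton_right,
                hfree B hB]
              tauto)]
  rw [Matroid.rayleighDiff, Matroid.rayleighDiff, map_sub, map_mul, map_mul, map_sub,
    map_mul, map_mul, h1, h2, h3, h4]
  ring

lemma pair_zero (e f : α) (heP : e ∈ insert a A) (hfP : f ∈ insert a A) (hef : e ≠ f) :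
    M.minorPoly {e, f} ∅ = 0 := by
  have hempty : bSet M {e, f} ∅ = ∅ := by
    rw [Finset.eq_empty_iff_forall_notMem]
    intro B hB
    rw [mem_bSet] at hB
    have he : e ∈ B := hB.2.1 (Finset.mem_insert_self e {f})
    have hf : f ∈ B := hB.2.1 (Finset.mem_insert_of_mem (Finset.mem_singleton_self f))
    exact hef (base_par_unique hloopless ha haA hA hpar hB.1 he hf heP hfP)
  rw [minorPoly_eq, hempty, Finset.sum_empty]

lemma aux_MtoN (hM : M.IsRayleigh) (e : α) (heE : e ∈ M.E) (heP : e ∉ insert a A)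
    (y : α → ℝ) (hy : ∀ c ∈ M.E \ ↑A, 0 < y c) :
    0 ≤ eval y ((M.del ↑A).rayleighDiff e a) := by
  have hea : e ≠ a := fun h => heP (by rw [h]; exact Finset.mem_insert_self a A)
  set z : α → ℝ := fun c => if c ∈ A then 1 else y c with hz
  have hkey := caseTwo hloopless ha haA hA hpar e a heE heP (Finset.mem_insert_self a A) z
  have hcongr : eval z ((M.del ↑A).rayleighDiff e a)
      = eval y ((M.del ↑A).rayleighDiff e a) := by
    refine eval_rayleighDiff_congr _ e a fun c hc => ?_
    have hc' : c ∈ M.E \ ↑A := hc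
    have hcA : c ∉ A := fun h => hc'.2 (Finset.mem_coe.2 h)
    simp [hz, hcA]
  have hpos : ∀ c ∈ M.E, 0 < z c := by
    intro c hc
    by_cases hcA : c ∈ A
    · simp [hz, hcA]
    · simpa [hz, hcA] using hy c ⟨hc, fun h => hcA (Finset.mem_coe.1 h)⟩
  have h0 := hM e heE a ha hea z hpos
  rwa [hkey, hcongr] at h0

lemma Beval_rayleigh (e f : α) (heP : e ∉ insert a A) (hfP : f ∉ insert a A)
    (y : α → ℝ) :
    eval y (M.rayleighDiff e f)
      = eval (fun c => if c = a then y a + ∑ b ∈ A, y b else y c)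
          ((M.del ↑A).rayleighDiff e f) := by
  have hIe : ∀ x ∈ ({e} : Finset α), x ∉ insert a A := by
    intro x hx
    rw [Finset.mem_singleton] at hx
    subst hx
    exact heP
  have hIf : ∀ x ∈ ({f} : Finset α), x ∉ insert a A := by
    intro x hx
    rw [Finset.mem_singleton] at hx
    subst hx
    exact hfP
  have hIef : ∀ x ∈ ({e, f} : Finset α), x ∉ insert a A := by
    intro x hx
    rcases Finset.mem_insert.1 hx with rfl | hx'
    · exact heP
    · rw [Finset.mem_singleton] at hx'
      subst hx'
      exact hfP
  simp only [Matroid.rayleighDiff, map_sub, map_mul]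
  rw [Beval hloopless ha haA hA hpar {e} {f} hIe hIf y,
    Beval hloopless ha haA hA hpar {f} {e} hIf hIe y,
    Beval hloopless ha haA hA hpar {e, f} ∅ hIef (by simp) y,
    Beval hloopless ha haA hA hpar ∅ {e, f} (by simp) hIef y]

end Core

/-- Let `M` be a loopless matroid, let `a` together with the elements of the set `A`
be pairwise parallel elements of `M` (each pair forms a `2`-element circuit, i.e. is
dependent while each singleton is independent), and let `N = M ∖ A`. With the
substitution `w_c = y_c` for `c ≠ a` and `w_a = y_a + Σ_{b ∈ A} y_b`, the basis
generating polynomials satisfy `M(y) = N(w)`, and `M` is Rayleigh iff `N` is. -/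


theorem parallel_reduction {α : Type*} [Fintype α] [DecidableEq α]
    (M : Matroid α) (hloopless : ∀ e ∈ M.E, M.Indep {e})
    (a : α) (A : Finset α) (ha : a ∈ M.E) (haA : a ∉ A) (hA : ↑A ⊆ M.E)
    (hpar : ∀ x ∈ insert a A, ∀ y ∈ insert a A, x ≠ y → M.Dep {x, y}) :
    (∀ y : α → ℝ,
      eval y (M.minorPoly ∅ ∅) =
        eval (fun c => if c = a then y a + ∑ b ∈ A, y b else y c)
          ((M.del ↑A).minorPoly ∅ ∅))
    ∧ (M.IsRayleigh ↔ (M.del ↑A).IsRayleigh) := by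
  constructor
  · intro y
    exact Beval hloopless ha haA hA hpar ∅ ∅ (by simp) (by simp) y
  constructor
  · -- M Rayleigh → N Rayleigh
    intro hM e he f hf hef y hy
    have he' : e ∈ M.E \ ↑A := he
    have hf' : f ∈ M.E \ ↑A := hf
    have heA : e ∉ A := fun h => he'.2 (Finset.mem_coe.2 h)
    have hfA : f ∉ A := fun h => hf'.2 (Finset.mem_coe.2 h)
    have hy' : ∀ c ∈ M.E \ ↑A, 0 < y c := hy
    by_cases hea : e = a
    · have hfP : f ∉ insert a A := by
        intro h
        rcases Finset.mem_insert.1 h with h' | h'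
        · exact hef (hea.trans h'.symm)
        · exact hfA h'
      rw [hea, rayleighDiff_comm]
      exact aux_MtoN hloopless ha haA hA hpar hM f hf'.1 hfP y hy'
    · by_cases hfa : f = a
      · have heP : e ∉ insert a A := by
          intro h
          rcases Finset.mem_insert.1 h with h' | h'
          · exact hea h'
          · exact heA h'
        rw [hfa]
        exact aux_MtoN hloopless ha haA hA hpar hM e he'.1 heP y hy'
      · -- neither e nor f is a
        have heP : e ∉ insert a A := by
          intro h
          rcases Finset.mem_insert.1 h with h' | h'
          · exact hea h'
          · exact heA h'
        have hfP : f ∉ insert a A := by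
          intro h
          rcases Finset.mem_insert.1 h with h' | h'
          · exact hfa h'
          · exact hfA h'
        have hya : 0 < y a := hy' a ⟨ha, fun h => haA (Finset.mem_coe.1 h)⟩
        have hk : (0 : ℝ) < (A.card : ℝ) + 1 := by positivity
        set z : α → ℝ := fun c => if c ∈ insert a A then y a / ((A.card : ℝ) + 1) else y c
          with hz
        have hzpos : ∀ c ∈ M.E, 0 < z c := by
          intro c hc
          by_cases hcP : c ∈ insert a A
          · simp only [hz, if_pos hcP]
            positivity
          · simp only [hz, if_neg hcP]
            exact hy' c ⟨hc, fun h => hcP (Finset.mem_insert_of_mem (Finset.mem_coe.1 h))⟩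
        have h1 := Beval_rayleigh hloopless ha haA hA hpar e f heP hfP z
        have h2 : eval (fun c => if c = a then z a + ∑ b ∈ A, z b else z c)
            ((M.del ↑A).rayleighDiff e f) = eval y ((M.del ↑A).rayleighDiff e f) := by
          refine eval_rayleighDiff_congr _ e f fun c hc => ?_
          have hc' : c ∈ M.E \ ↑A := hc
          have hcA : c ∉ A := fun h => hc'.2 (Finset.mem_coe.2 h)
          by_cases hca : c = a
          · rw [hca, if_pos rfl]
            have hza : z a = y a / ((A.card : ℝ) + 1) := by
              simp [hz]
            have hsum : ∑ b ∈ A, z b = (A.card : ℝ) * (y a / ((A.card : ℝ) + 1)) := by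
              rw [Finset.sum_congr rfl fun b hb =>
                show z b = y a / ((A.card : ℝ) + 1) by
                  simp only [hz]
                  rw [if_pos (Finset.mem_insert_of_mem hb)]]
              rw [Finset.sum_const, nsmul_eq_mul]
            rw [hza, hsum]
            linear_combination y a * mul_inv_cancel₀ hk.ne'
          · have hcP : c ∉ insert a A := by
              intro h
              rcases Finset.mem_insert.1 h with h' | h'
              · exact hca h'
              · exact hcA h'
            rw [if_neg hca]
            simp only [hz]
            rw [if_neg hcP]
        have h0 := hM e he'.1 f hf'.1 hef z hzpos
        rwa [h1, h2] at h0
  · -- N Rayleigh → M Rayleigh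
    intro hN e heE f hfE hef y hy
    have hy' : ∀ c ∈ (M.del ↑A).E, 0 < y c := fun c hc => by
      have hc' : c ∈ M.E \ ↑A := hc
      exact hy c hc'.1
    have haN : a ∈ (M.del ↑A).E := show a ∈ M.E \ ↑A from
      ⟨ha, fun h => haA (Finset.mem_coe.1 h)⟩
    by_cases heP : e ∈ insert a A
    · by_cases hfP : f ∈ insert a A
      · -- both parallel: the subtracted term vanishes
        have hz := pair_zero hloopless ha haA hA hpar e f heP hfP hef
        rw [Matroid.rayleighDiff, map_sub, map_mul, map_mul, hz, map_zero, zero_mul,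
          sub_zero]
        exact mul_nonneg (eval_minorPoly_nonneg _ _ _ fun c hc => (hy c hc).le)
          (eval_minorPoly_nonneg _ _ _ fun c hc => (hy c hc).le)
      · -- e parallel, f not
        rw [rayleighDiff_comm, caseTwo hloopless ha haA hA hpar f e hfE hfP heP y]
        have hfN : f ∈ (M.del ↑A).E := show f ∈ M.E \ ↑A from
          ⟨hfE, fun h => hfP (Finset.mem_insert_of_mem (Finset.mem_coe.1 h))⟩
        exact hN f hfN a haN
          (fun h => hfP (by rw [h]; exact Finset.mem_insert_self a A)) y hy'
    · by_cases hfP : f ∈ insert a A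
      · rw [caseTwo hloopless ha haA hA hpar e f heE heP hfP y]
        have heN : e ∈ (M.del ↑A).E := show e ∈ M.E \ ↑A from
          ⟨heE, fun h => heP (Finset.mem_insert_of_mem (Finset.mem_coe.1 h))⟩
        exact hN e heN a haN
          (fun h => heP (by rw [h]; exact Finset.mem_insert_self a A)) y hy'
      · -- neither parallel
        rw [Beval_rayleigh hloopless ha haA hA hpar e f heP hfP y]
        have heN : e ∈ (M.del ↑A).E := show e ∈ M.E \ ↑A from
          ⟨heE, fun h => heP (Finset.mem_insert_of_mem (Finset.mem_coe.1 h))⟩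
        have hfN : f ∈ (M.del ↑A).E := show f ∈ M.E \ ↑A from
          ⟨hfE, fun h => hfP (Finset.mem_insert_of_mem (Finset.mem_coe.1 h))⟩
        refine hN e heN f hfN hef _ fun c hc => ?_
        have hc' : c ∈ M.E \ ↑A := hc
        by_cases hca : c = a
        · subst hca
          simp only [if_pos rfl]
          exact add_pos_of_pos_of_nonneg (hy c hc'.1)
            (Finset.sum_nonneg fun b hb => (hy b (hA (Finset.mem_coe.2 hb))).le)
        · simp only [if_neg hca]
          exact hy c hc'.1
end
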